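/- arXiv:0903.4764 — 12 statements merged into one kernel-verified Lean document; each statement's English description precedes it below -/
import Mathlib

section
/- The additive subgroup of V generated by a locally finite irreducible root system is a free abelian group; that is, if (Δ, V) is a locally finite irreducible root system over ℚ, then the subgroup ⟨Δ⟩ of (V, +) generated by Δ is free. -/
open Submodule

/-- The reflection `σ_α(x) = x - ⟨x,α⟩α` where `⟨x,α⟩ = 2(x,α)/(α,α)`. -/
def rroot {V : Type*} [AddCommGroup V] [Module ℚ V]
    (B : LinearMap.BilinForm ℚ V) (α x : V) : V :=
  x - (2 * B x α / B α α) • α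

/-- A locally extended affine root system (axioms (A1)–(A4)). -/
def IsLEARS {V : Type*} [AddCommGroup V] [Module ℚ V]
    (B : LinearMap.BilinForm ℚ V) (R : Set V) : Prop :=
  (∀ α ∈ R, B α α ≠ 0) ∧
  Submodule.span ℚ R = ⊤ ∧
  (∀ α ∈ R, ∀ β ∈ R, ∃ n : ℤ, 2 * B α β / B β β = (n : ℚ)) ∧
  (∀ α ∈ R, ∀ β ∈ R, rroot B α β ∈ R) ∧
  (∀ R₁ R₂ : Set V, R = R₁ ∪ R₂ → (∀ x ∈ R₁, ∀ y ∈ R₂, B x y = 0) →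
    R₁ = ∅ ∨ R₂ = ∅)

/-!
The Cartan integers `⟨x, α⟩ = 2(x,α)/(α,α)` (`α ∈ Δ`) embed `⟨Δ⟩` into the functions `Δ → ℤ`;
the embedding is injective because `Δ` spans `V` and the form is definite. For roots `α, β`,
Cauchy–Schwarz gives `⟨α,β⟩⟨β,α⟩ ≤ 4`, and the two integers vanish together, so `|⟨α,β⟩| ≤ 4`.
Hence every element of `⟨Δ⟩` goes to a function taking finitely many values. Such functions on
a set `X` are the restrictions of the locally constant functions on the Stone–Čech
compactification `Ultrafilter X`, a free abelian group by Nöbeling's theorem; and a subgroup of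
a free abelian group is free (echelon form along a well-ordered basis).
-/

theorem linearIndependent_of_triangular {R M κ : Type*} [CommRing R] [NoZeroDivisors R]
    [AddCommGroup M] [Module R M] [LinearOrder κ] {v : κ → M} (f : κ → M →ₗ[R] R)
    (hdiag : ∀ i, f i (v i) ≠ 0) (htri : ∀ i j, i < j → f j (v i) = 0) :
    LinearIndependent R v := by
  classical
  rw [linearIndependent_iff']
  intro s
  induction s using Finset.induction_on_max with
  | empty => simp
  | insert a s hlt ih =>
    intro g hg
    have has : a ∉ s := fun h => lt_irrefl a (hlt a h)
    rw [Finset.sum_insert has] at hg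
    have hga : g a = 0 := by
      have h := congrArg (f a) hg
      rw [map_add, map_sum, Finset.sum_eq_zero fun i hi => by rw [map_smul, htri i a (hlt i hi),
        smul_zero], add_zero, map_smul, smul_eq_mul, map_zero] at h
      exact (mul_eq_zero.1 h).resolve_right (hdiag a)
    rw [hga, zero_smul, zero_add] at hg
    intro i hi
    rcases Finset.mem_insert.1 hi with rfl | hi
    · exact hga
    · exact ih g hg i hi

namespace Module.Basis

variable {R M ι : Type*} [CommRing R] [AddCommGroup M] [Module R M] [LinearOrder ι]
  (b : Basis ι R M) (N : Submodule R M)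

noncomputable def filtration (i : ι) : Submodule R M :=
  N ⊓ ⨅ (j) (_ : i < j), LinearMap.ker (b.coord j)

noncomputable def leadingIdeal (i : ι) : Ideal R :=
  (b.filtration N i).map (b.coord i)

noncomputable def leadingGenerator [IsPrincipalIdealRing R] (i : ι) : R :=
  IsPrincipal.generator (b.leadingIdeal N i)

variable {b N}

theorem mem_filtration {i : ι} {x : M} :
    x ∈ b.filtration N i ↔ x ∈ N ∧ ∀ j, i < j → b.repr x j = 0 := by
  simp [filtration, Submodule.mem_iInf]

theorem mem_filtration_max' {x : M} (hx : x ∈ N) (h : (b.repr x).support.Nonempty) :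
    x ∈ b.filtration N ((b.repr x).support.max' h) :=
  mem_filtration.2 ⟨hx, fun _ hj =>
    Finsupp.notMem_support_iff.1 fun hs => not_le.2 hj (Finset.le_max' _ _ hs)⟩

theorem exists_lt_mem_filtration {i : ι} {x : M} (hx : x ∈ b.filtration N i)
    (hxi : b.repr x i = 0) (hx0 : x ≠ 0) : ∃ j < i, x ∈ b.filtration N j := by
  have h : (b.repr x).support.Nonempty :=
    Finsupp.support_nonempty_iff.2 (b.repr.map_ne_zero_iff.2 hx0)
  set j := (b.repr x).support.max' h
  have hj : b.repr x j ≠ 0 := Finsupp.mem_support_iff.1 (Finset.max'_mem _ h)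
  have hji : j ≤ i := not_lt.1 fun hij => hj ((mem_filtration.1 hx).2 j hij)
  exact ⟨j, hji.lt_of_ne fun h => hj (h ▸ hxi), mem_filtration_max' (mem_filtration.1 hx).1 h⟩

variable [IsPrincipalIdealRing R]

theorem filtration_le_span [WellFoundedLT ι] {x : ι → M} (hx : ∀ i, x i ∈ b.filtration N i)
    (hxi : ∀ i, b.coord i (x i) = b.leadingGenerator N i) (i : ι) :
    b.filtration N i ≤ span R (Set.range fun k : {i // b.leadingGenerator N i ≠ 0} => x k) := by
  set S := span R (Set.range fun k : {i // b.leadingGenerator N i ≠ 0} => x k)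
  induction i using WellFoundedLT.induction with
  | _ i ih =>
  intro y hy
  obtain ⟨a, ha⟩ : ∃ a, b.repr y i = a * b.leadingGenerator N i :=
    (IsPrincipal.mem_iff_eq_smul_generator _).1 (mem_map_of_mem hy)
  obtain ⟨z, hzS, hz, hyz⟩ : ∃ z ∈ S, z ∈ b.filtration N i ∧ b.repr (y - z) i = 0 := by
    by_cases hg : b.leadingGenerator N i = 0
    · refine ⟨0, zero_mem _, zero_mem _, ?_⟩
      simpa [hg] using ha
    · refine ⟨a • x i, smul_mem _ _ (subset_span ⟨⟨i, hg⟩, rfl⟩), smul_mem _ _ (hx i),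
        ?_⟩
      simp [ha, ← coord_apply, hxi]
  have hyz' : y - z ∈ b.filtration N i := sub_mem hy hz
  rw [← sub_add_cancel y z]
  refine add_mem ?_ hzS
  rcases eq_or_ne (y - z) 0 with h0 | h0
  · exact h0 ▸ zero_mem _
  · obtain ⟨j, hji, hj⟩ := exists_lt_mem_filtration hyz' hyz h0
    exact ih j hji hj

end Module.Basis

open Module.Basis in
theorem Submodule.free_of_isPrincipalIdealRing {R M : Type*} [CommRing R] [IsDomain R]
    [IsPrincipalIdealRing R] [AddCommGroup M] [Module R M] [Module.Free R M]
    (N : Submodule R M) : Module.Free R N := by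
  let b := Module.Free.chooseBasis R M
  obtain ⟨_, _⟩ := exists_wellFoundedLT (Module.Free.ChooseBasisIndex R M)
  have hgen (i) : b.leadingGenerator N i ∈ b.leadingIdeal N i := IsPrincipal.generator_mem _
  choose x hx hxi using fun i => mem_map.1 (hgen i)
  set v := fun k : {i // b.leadingGenerator N i ≠ 0} => x k
  have hli : LinearIndependent R v := linearIndependent_of_triangular (fun k => b.coord k)
    (fun k => by simpa [v, hxi] using k.2)
    (fun k l hkl => (mem_filtration.1 (hx k)).2 l hkl)
  have hspan : span R (Set.range v) = N := by
    refine le_antisymm (span_le.2 (Set.range_subset_iff.2 fun k => (mem_filtration.1 (hx k)).1))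
      fun y hy => ?_
    rcases eq_or_ne y 0 with rfl | hy0
    · exact zero_mem _
    · have h := Finsupp.support_nonempty_iff.2 (b.repr.map_ne_zero_iff.2 hy0)
      exact filtration_le_span hx hxi _ (mem_filtration_max' hy h)
  exact Module.Free.of_basis ((Module.Basis.span hli).map (LinearEquiv.ofEq _ _ hspan))

theorem Module.Free.of_injective_of_isPrincipalIdealRing {R M N : Type*} [CommRing R]
    [IsDomain R] [IsPrincipalIdealRing R] [AddCommGroup M] [Module R M] [Module.Free R M]
    [AddCommGroup N] [Module R N] (f : N →ₗ[R] M) (hf : Function.Injective f) :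
    Module.Free R N :=
  have := Submodule.free_of_isPrincipalIdealRing (LinearMap.range f)
  Module.Free.of_equiv (LinearEquiv.ofInjective f hf).symm

section FiniteIntValued

open scoped Pointwise

variable (X K : Type*) [AddCommGroupWithOne K]

def finiteIntValued : AddSubgroup (X → K) where
  carrier := {f | (Set.range f).Finite ∧ Set.range f ⊆ Set.range ((↑) : ℤ → K)}
  zero_mem' := ⟨(Set.finite_singleton 0).subset (Set.range_subset_iff.2 fun _ => rfl),
    Set.range_subset_iff.2 fun _ => ⟨0, Int.cast_zero⟩⟩
  add_mem' := by
    rintro f g ⟨hf, hfℤ⟩ ⟨hg, hgℤ⟩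
    have hsub : Set.range (f + g) ⊆ Set.range f + Set.range g :=
      Set.range_subset_iff.2 fun x => Set.add_mem_add ⟨x, rfl⟩ ⟨x, rfl⟩
    refine ⟨(hf.add hg).subset hsub, Set.range_subset_iff.2 fun x => ?_⟩
    obtain ⟨m, hm⟩ := hfℤ ⟨x, rfl⟩
    obtain ⟨n, hn⟩ := hgℤ ⟨x, rfl⟩
    exact ⟨m + n, by simp [hm, hn]⟩
  neg_mem' := by
    rintro f ⟨hf, hfℤ⟩
    refine ⟨hf.neg.subset (Set.range_subset_iff.2 fun x => Set.neg_mem_neg.2 ⟨x, rfl⟩),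
      Set.range_subset_iff.2 fun x => ?_⟩
    obtain ⟨m, hm⟩ := hfℤ ⟨x, rfl⟩
    exact ⟨-m, by simp [hm]⟩

def restrictPure : LocallyConstant (Ultrafilter X) ℤ →+ (X → K) where
  toFun f x := f (pure x)
  map_zero' := by ext; simp
  map_add' f g := by ext; simp

variable {X K}

theorem restrictPure_injective [CharZero K] : Function.Injective (restrictPure X K) := by
  intro f g hfg
  refine LocallyConstant.coe_injective (denseRange_pure.equalizer f.continuous g.continuous ?_)
  funext x
  exact Int.cast_injective (congrFun hfg x : ((f (pure x) : ℤ) : K) = g (pure x))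

theorem restrictPure_mem_finiteIntValued (f : LocallyConstant (Ultrafilter X) ℤ) :
    restrictPure X K f ∈ finiteIntValued X K :=
  ⟨(f.range_finite.image ((↑) : ℤ → K)).subset
      (by rintro _ ⟨x, rfl⟩; exact ⟨_, ⟨_, rfl⟩, rfl⟩),
    by rintro _ ⟨x, rfl⟩; exact ⟨_, rfl⟩⟩

theorem indicator_one_mem_range_restrictPure (S : Set X) :
    S.indicator 1 ∈ (restrictPure X K).range := by
  refine ⟨LocallyConstant.charFn ℤ
    ⟨ultrafilter_isClosed_basic S, ultrafilter_isOpen_basic S⟩, funext fun x => ?_⟩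
  change ((Set.indicator {u : Ultrafilter X | S ∈ u} 1 (pure x) : ℤ) : K) = _
  by_cases hx : x ∈ S <;> simp [hx]

theorem finiteIntValued_le_range_restrictPure :
    finiteIntValued X K ≤ (restrictPure X K).range := by
  rintro f ⟨hf, hfℤ⟩
  classical
  have hsum : f = ∑ v ∈ hf.toFinset, (f ⁻¹' {v}).indicator (fun _ => v) := by
    funext x
    simp [Finset.sum_apply, Set.indicator_apply]
  rw [hsum]
  refine AddSubgroup.sum_mem _ fun v hv => ?_
  obtain ⟨n, rfl⟩ := hfℤ (hf.mem_toFinset.1 hv)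
  have : (f ⁻¹' {(n : K)}).indicator (fun _ => (n : K)) =
      n • (f ⁻¹' {(n : K)}).indicator 1 := by
    funext x
    by_cases hx : x ∈ f ⁻¹' {(n : K)} <;> simp [hx]
  rw [this]
  exact AddSubgroup.zsmul_mem _ (indicator_one_mem_range_restrictPure _) n

variable [CharZero K]

noncomputable def locallyConstantUltrafilterEquiv :
    LocallyConstant (Ultrafilter X) ℤ ≃+ finiteIntValued X K :=
  AddEquiv.ofBijective ((restrictPure X K).codRestrict _ restrictPure_mem_finiteIntValued)
    ⟨fun f g h => restrictPure_injective (congrArg Subtype.val h), fun f => by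
      obtain ⟨g, hg⟩ := finiteIntValued_le_range_restrictPure f.2
      exact ⟨g, Subtype.ext hg⟩⟩

instance : Module.Free ℤ (finiteIntValued X K) :=
  have := LocallyConstant.freeOfProfinite (Profinite.of (Ultrafilter X))
  Module.Free.of_equiv locallyConstantUltrafilterEquiv.toIntLinearEquiv

end FiniteIntValued

section CartanPairing

variable {V : Type*} [AddCommGroup V] [Module ℚ V] (B : LinearMap.BilinForm ℚ V)

def cartanPairing (Δ : Set V) : V →+ (Δ → ℚ) where
  toFun x α := 2 * B x α / B α α
  map_zero' := by ext; simp
  map_add' x y := by ext; simp [mul_add, add_div]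

theorem cartanPairing_injective (hposdef : ∀ x : V, x ≠ 0 → 0 < B x x) {Δ : Set V}
    (hΔ : ∀ α ∈ Δ, B α α ≠ 0) (hspan : Submodule.span ℚ Δ = ⊤) :
    Function.Injective (cartanPairing B Δ) := by
  refine (injective_iff_map_eq_zero _).2 fun x hx => ?_
  have hΔx : Δ ≤ LinearMap.ker (B x) := fun α hα => by
    simpa [cartanPairing, hΔ α hα] using congrFun hx ⟨α, hα⟩
  have hxx : B x x = 0 := (Submodule.span_le.2 hΔx (hspan ▸ Submodule.mem_top) :)
  by_contra hx0
  exact (hposdef x hx0).ne' hxx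

theorem abs_two_mul_div_le_four (hsym : ∀ x y : V, B x y = B y x)
    (hposdef : ∀ x : V, x ≠ 0 → 0 < B x x) {α β : V} (m : ℤ)
    (hm : 2 * B β α / B α α = m) : |2 * B α β / B β β| ≤ 4 := by
  rcases eq_or_ne (B α β) 0 with h0 | h0
  · simp [h0]
  have hpsd : ∀ x, 0 ≤ B x x := fun x => by
    rcases eq_or_ne x 0 with rfl | hx
    · simp
    · exact (hposdef x hx).le
  have hcs := B.apply_sq_le_of_symm hpsd ⟨fun x y => hsym x y⟩ α β
  have hα : 0 < B α α := hposdef α (by rintro rfl; simp at h0)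
  have hβ : 0 < B β β := hposdef β (by rintro rfl; simp at h0)
  have hnm : 2 * B α β / B β β * m = 4 * B α β ^ 2 / (B α α * B β β) := by
    rw [← hm, hsym β α]; field_simp; ring
  have hm0 : m ≠ 0 := by
    rintro rfl
    exact h0 (by simpa [hsym β α, hα.ne'] using hm)
  have hm1 : (1 : ℚ) ≤ |(m : ℚ)| := by exact_mod_cast Int.one_le_abs hm0
  calc |2 * B α β / B β β| ≤ |2 * B α β / B β β| * |(m : ℚ)| :=
        le_mul_of_one_le_right (abs_nonneg _) hm1
    _ = 2 * B α β / B β β * m := by rw [← abs_mul, abs_of_nonneg (hnm ▸ by positivity)]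
    _ ≤ 4 := by rw [hnm, div_le_iff₀ (by positivity)]; linarith

theorem cartanPairing_mem_finiteIntValued (hsym : ∀ x y : V, B x y = B y x)
    (hposdef : ∀ x : V, x ≠ 0 → 0 < B x x) {Δ : Set V}
    (hint : ∀ α ∈ Δ, ∀ β ∈ Δ, ∃ n : ℤ, 2 * B α β / B β β = (n : ℚ))
    {x : V} (hx : x ∈ AddSubgroup.closure Δ) :
    cartanPairing B Δ x ∈ finiteIntValued Δ ℚ := by
  suffices h : AddSubgroup.closure Δ ≤ (finiteIntValued Δ ℚ).comap (cartanPairing B Δ) from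
    h hx
  refine (AddSubgroup.closure_le _).2 fun α hα => ?_
  have hvals : Set.range (cartanPairing B Δ α) ⊆ ((↑) : ℤ → ℚ) '' Set.Icc (-4) 4 := by
    rintro _ ⟨β, rfl⟩
    obtain ⟨n, hn⟩ := hint α hα β β.2
    obtain ⟨m, hm⟩ := hint β β.2 α hα
    have h4 := abs_two_mul_div_le_four B hsym hposdef m hm
    rw [hn] at h4
    exact ⟨n, abs_le.1 (by exact_mod_cast h4), hn.symm⟩
  exact ⟨(Set.finite_Icc _ _ |>.image _).subset hvals, hvals.trans (Set.image_subset_range _ _)⟩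

end CartanPairing

/-- The additive subgroup generated by a locally finite irreducible root system is free. -/
theorem addSubgroup_closure_of_locally_finite_irreducible_root_system_free
    {V : Type*} [AddCommGroup V] [Module ℚ V]
    (B : LinearMap.BilinForm ℚ V)
    (hsym : ∀ x y : V, B x y = B y x)
    (hposdef : ∀ x : V, x ≠ 0 → 0 < B x x)
    (Δ : Set V) (hΔ : IsLEARS B Δ) :
    Module.Free ℤ ↥(AddSubgroup.closure Δ) := by
  obtain ⟨hΔ0, hspan, hint, -, -⟩ := hΔ
  let φ : AddSubgroup.closure Δ →+ finiteIntValued Δ ℚ :=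
    ((cartanPairing B Δ).comp (AddSubgroup.closure Δ).subtype).codRestrict _
      fun x => cartanPairing_mem_finiteIntValued B hsym hposdef hint x.2
  have hφ : Function.Injective φ := fun x y h =>
    Subtype.ext (cartanPairing_injective B hposdef hΔ0 hspan (congrArg Subtype.val h))
  exact Module.Free.of_injective_of_isPrincipalIdealRing φ.toIntLinearMap hφ
end

section
/- A LEARS is a directed union of extended affine root systems of finite rank: if (R, V) is a LEARS, then there is a family of subsets of R, directed under inclusion and with union equal to R, such that each member R′ of the family spans a finite-dimensional subspace W of V, satisfies axioms (A1)–(A4) in W with the restricted form, and generates a free abelian subgroup ⟨R′⟩ of finite rank. -/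
open Submodule

/-!
Call two roots linked when they are not orthogonal. By irreducibility the linkage graph on `R`
is connected. Fix a root `α₀` and, for every finite connected set `G` of
roots containing `α₀`, take `R ∩ ⟨G⟩`. Reflections act by `β ↦ β - nα` with `n ∈ ℤ`, so this
piece is reflection-closed. It is irreducible: a splitting into two orthogonal parts puts the
connected set `G` on one side, and a root on the other side is then orthogonal to `⟨G⟩`, hence to
itself. The group it generates lies in the finitely generated torsion-free group `⟨G⟩`, so it is free of
finite rank. Two such `G` meet in `α₀`, so their union is again connected, and walks from `α₀`
show that every root lies in some piece.
-/

namespace SimpleGraph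

variable {α : Type*} {G : SimpleGraph α}

theorem subset_or_subset_of_preconnected_induce {s t u : Set α}
    (hs : (G.induce s).Preconnected) (hstu : s ⊆ t ∪ u)
    (hadj : ∀ x ∈ t, ∀ y ∈ u, ¬ G.Adj x y) : s ⊆ t ∨ s ⊆ u := by
  by_contra! h
  obtain ⟨x, hxs, hxt⟩ := Set.not_subset.mp h.1
  obtain ⟨y, hys, hyu⟩ := Set.not_subset.mp h.2
  obtain ⟨p⟩ := hs ⟨y, hys⟩ ⟨x, hxs⟩
  obtain ⟨d, -, hd_fst, hd_snd⟩ :=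
    p.exists_boundary_dart {z | (z : α) ∈ t} ((hstu hys).resolve_right hyu) hxt
  exact hadj _ hd_fst _ ((hstu d.snd.2).resolve_left hd_snd) d.adj

theorem exists_finite_connected_induce_of_reachable {s : Set α} {u v : α}
    (hu : u ∈ s) (hv : v ∈ s) (h : (G.induce s).Reachable ⟨u, hu⟩ ⟨v, hv⟩) :
    ∃ t ⊆ s, t.Finite ∧ u ∈ t ∧ v ∈ t ∧ (G.induce t).Connected := by
  obtain ⟨q⟩ := h
  let p := q.map (Embedding.induce s).toHom
  refine ⟨{w | w ∈ p.support}, ?_, p.support.finite_toSet, p.start_mem_support,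
    p.end_mem_support, p.connected_induce_support⟩
  intro w hw
  simp only [p, Walk.support_map, Set.mem_ofPred_eq, List.mem_map] at hw
  obtain ⟨w', -, rfl⟩ := hw
  exact w'.2

end SimpleGraph

section Linkage

variable {k V : Type*} [CommRing k] [AddCommGroup V] [Module k V]

def IsOrthIndecomposable (B : LinearMap.BilinForm k V) (S : Set V) : Prop :=
  ∀ S₁ S₂ : Set V, S = S₁ ∪ S₂ → (∀ x ∈ S₁, ∀ y ∈ S₂, B x y = 0) → S₁ = ∅ ∨ S₂ = ∅

def linkGraph (B : LinearMap.BilinForm k V) : SimpleGraph V :=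
  SimpleGraph.fromRel fun x y => B x y ≠ 0

variable {B : LinearMap.BilinForm k V}

theorem IsOrthIndecomposable.preconnected_induce_linkGraph {S : Set V}
    (hS : IsOrthIndecomposable B S) : ((linkGraph B).induce S).Preconnected := by
  rintro u v
  let C : Set V := {x | ∃ hx : x ∈ S, ((linkGraph B).induce S).Reachable u ⟨x, hx⟩}
  have hCS : C ⊆ S := fun x hx => hx.1
  have horth : ∀ x ∈ C, ∀ y ∈ S \ C, B x y = 0 := by
    rintro x ⟨hxS, hux⟩ y ⟨hyS, hyC⟩
    by_contra hxy
    have hne : x ≠ y := by rintro rfl; exact hyC ⟨hxS, hux⟩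
    have hadj : ((linkGraph B).induce S).Adj ⟨x, hxS⟩ ⟨y, hyS⟩ := ⟨hne, Or.inl hxy⟩
    exact hyC ⟨hyS, hux.trans hadj.reachable⟩
  rcases hS C (S \ C) (Set.union_sdiff_cancel hCS).symm horth with hC | hC
  · exact absurd hC (Set.nonempty_iff_ne_empty.mp ⟨u, u.2, .rfl⟩)
  · by_contra huv
    exact Set.eq_empty_iff_forall_notMem.mp hC v ⟨v.2, fun hv => huv hv.2⟩

theorem IsOrthIndecomposable.restrict {W : Submodule k V} {T : Set W}
    (hT : IsOrthIndecomposable B (Subtype.val '' T)) :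
    IsOrthIndecomposable (B.restrict W) T := by
  intro T₁ T₂ hT₁₂ horth
  have := hT (Subtype.val '' T₁) (Subtype.val '' T₂) (by rw [hT₁₂, Set.image_union])
    (by rintro _ ⟨x, hx, rfl⟩ _ ⟨y, hy, rfl⟩; exact horth x hx y hy)
  simpa only [Set.image_eq_empty] using this

theorem isOrthIndecomposable_inter_closure (hsym : ∀ x y : V, B x y = B y x)
    {S G : Set V} (hS : ∀ α ∈ S, B α α ≠ 0) (hGS : G ⊆ S)
    (hG : ((linkGraph B).induce G).Connected) :
    IsOrthIndecomposable B (S ∩ AddSubgroup.closure G) := by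
  intro S₁ S₂ hS₁₂ horth
  have hG_sub : G ⊆ S₁ ∪ S₂ := fun g hg => hS₁₂ ▸ ⟨hGS hg, AddSubgroup.subset_closure hg⟩
  have hno_adj : ∀ x ∈ S₁, ∀ y ∈ S₂, ¬ (linkGraph B).Adj x y := by
    intro x hx y hy hxy
    rcases hxy.2 with h | h
    · exact h (horth x hx y hy)
    · exact h (hsym y x ▸ horth x hx y hy)
  rcases S₁.eq_empty_or_nonempty with h₁ | ⟨γ₁, hγ₁⟩
  · exact Or.inl h₁
  rcases S₂.eq_empty_or_nonempty with h₂ | ⟨γ₂, hγ₂⟩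
  · exact Or.inr h₂
  exfalso
  rcases SimpleGraph.subset_or_subset_of_preconnected_induce hG.preconnected hG_sub hno_adj
    with hG₁ | hG₂
  · have hγ₂S : γ₂ ∈ S ∩ AddSubgroup.closure G := hS₁₂ ▸ Or.inr hγ₂
    have hker : AddSubgroup.closure G ≤ (LinearMap.ker (B.flip γ₂)).toAddSubgroup :=
      (AddSubgroup.closure_le _).mpr fun g hg => horth g (hG₁ hg) γ₂ hγ₂
    exact hS γ₂ hγ₂S.1 (hker hγ₂S.2)
  · have hγ₁S : γ₁ ∈ S ∩ AddSubgroup.closure G := hS₁₂ ▸ Or.inl hγ₁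
    have hker : AddSubgroup.closure G ≤ (LinearMap.ker (B γ₁)).toAddSubgroup :=
      (AddSubgroup.closure_le _).mpr fun g hg => horth γ₁ hγ₁ g (hG₂ hg)
    exact hS γ₁ hγ₁S.1 (hker hγ₁S.2)

end Linkage

theorem AddSubgroup.finite_free_of_le_closure {V : Type*} [AddCommGroup V] [IsAddTorsionFree V]
    {H : AddSubgroup V} {s : Set V} (hs : s.Finite) (hH : H ≤ AddSubgroup.closure s) :
    Module.Finite ℤ H ∧ Module.Free ℤ H := by
  have : Module.Finite ℤ H := by
    rw [Module.Finite.iff_addGroup_fg, AddGroup.fg_iff_addSubgroup_fg,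
      ← H.toIntSubmodule_toAddSubgroup, ← Submodule.fg_iff_addSubgroup_fg]
    refine (fg_span hs).of_le ?_
    rwa [← toAddSubgroup_le, span_int_eq_addSubgroupClosure, H.toIntSubmodule_toAddSubgroup]
  exact ⟨this, inferInstance⟩

section RootSystems

variable {V : Type*} [AddCommGroup V] [Module ℚ V] {B : LinearMap.BilinForm ℚ V}

theorem coe_rroot_restrict {W : Submodule ℚ V} (α β : W) :
    ((rroot (B.restrict W) α β : W) : V) = rroot B α β :=
  rfl

theorem rroot_eq_sub_zsmul {α β : V} {n : ℤ} (hn : 2 * B β α / B α α = n) :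
    rroot B α β = β - n • α := by
  rw [rroot, hn, Int.cast_smul_eq_zsmul]

variable (B) in
def IsFiniteRankEARS (R : Set V) : Prop :=
  FiniteDimensional ℚ (span ℚ R) ∧
    IsLEARS (B.restrict (span ℚ R)) {x : span ℚ R | (x : V) ∈ R} ∧
    Module.Free ℤ (AddSubgroup.closure R) ∧ Module.Finite ℤ (AddSubgroup.closure R)

namespace IsLEARS

variable {R : Set V}

theorem rroot_mem_inter_addSubgroup (hR : IsLEARS B R) (H : AddSubgroup V) {α β : V}
    (hα : α ∈ R ∩ H) (hβ : β ∈ R ∩ H) : rroot B α β ∈ R ∩ H := by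
  obtain ⟨n, hn⟩ := hR.2.2.1 β hβ.1 α hα.1
  refine ⟨hR.2.2.2.1 α hα.1 β hβ.1, ?_⟩
  rw [rroot_eq_sub_zsmul hn]
  exact H.sub_mem hβ.2 (H.zsmul_mem hα.2 n)

theorem restrict_span (hR : IsLEARS B R) {S : Set V} (hSR : S ⊆ R)
    (hrefl : ∀ α ∈ S, ∀ β ∈ S, rroot B α β ∈ S) (hS : IsOrthIndecomposable B S) :
    IsLEARS (B.restrict (span ℚ S)) {x : span ℚ S | (x : V) ∈ S} := by
  refine ⟨fun α hα => hR.1 α (hSR hα), span_span_coe_preimage,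
    fun α hα β hβ => hR.2.2.1 α (hSR hα) β (hSR hβ), fun α hα β hβ => ?_, ?_⟩
  · show ((rroot (B.restrict _) α β : span ℚ S) : V) ∈ S
    rw [coe_rroot_restrict]
    exact hrefl α hα β hβ
  · refine IsOrthIndecomposable.restrict ?_
    show IsOrthIndecomposable B (Subtype.val '' (Subtype.val ⁻¹' S))
    rwa [Set.image_preimage_eq_of_subset fun x hx => ⟨⟨x, subset_span hx⟩, rfl⟩]

theorem exists_finite_connected (hR : IsLEARS B R) {α β : V} (hα : α ∈ R) (hβ : β ∈ R) :
    ∃ G ⊆ R, G.Finite ∧ α ∈ G ∧ β ∈ G ∧ ((linkGraph B).induce G).Connected :=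
  SimpleGraph.exists_finite_connected_induce_of_reachable hα hβ
    (IsOrthIndecomposable.preconnected_induce_linkGraph hR.2.2.2.2 _ _)

theorem isFiniteRankEARS_inter_closure (hR : IsLEARS B R) (hsym : ∀ x y : V, B x y = B y x)
    {G : Set V} (hGfin : G.Finite) (hGR : G ⊆ R) (hG : ((linkGraph B).induce G).Connected) :
    IsFiniteRankEARS B (R ∩ AddSubgroup.closure G) := by
  have : IsAddTorsionFree V := .of_module_rat V
  obtain ⟨hfin, hfree⟩ := AddSubgroup.finite_free_of_le_closure hGfin
    ((AddSubgroup.closure_le _).mpr Set.inter_subset_right)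
  have hspan : span ℚ (R ∩ AddSubgroup.closure G) ≤ span ℚ G :=
    span_le.mpr fun _ hx => (AddSubgroup.closure_le (span ℚ G).toAddSubgroup).mpr subset_span hx.2
  have : FiniteDimensional ℚ (span ℚ G) := FiniteDimensional.span_of_finite ℚ hGfin
  exact ⟨Submodule.finiteDimensional_of_le hspan,
    hR.restrict_span Set.inter_subset_left
      (fun α hα β hβ => hR.rroot_mem_inter_addSubgroup _ hα hβ)
      (isOrthIndecomposable_inter_closure hsym hR.1 hGR hG),
    hfree, hfin⟩

end IsLEARS

end RootSystems

theorem LEARS_is_directed_union_of_finite_rank_EARS_general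
    {V : Type*} [AddCommGroup V] [Module ℚ V]
    (B : LinearMap.BilinForm ℚ V)
    (hsym : ∀ x y : V, B x y = B y x)
    (R : Set V) (hR : IsLEARS B R) :
    ∃ 𝒮 : Set (Set V),
      (∀ R' ∈ 𝒮, R' ⊆ R) ∧
      DirectedOn (· ⊆ ·) 𝒮 ∧
      ⋃₀ 𝒮 = R ∧
      ∀ R' ∈ 𝒮,
        FiniteDimensional ℚ ↥(Submodule.span ℚ R') ∧
        IsLEARS (B.restrict (Submodule.span ℚ R'))
          {x : ↥(Submodule.span ℚ R') | (x : V) ∈ R'} ∧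
        Module.Free ℤ ↥(AddSubgroup.closure R') ∧
        Module.Finite ℤ ↥(AddSubgroup.closure R') := by
  rcases R.eq_empty_or_nonempty with rfl | ⟨α₀, hα₀⟩
  · exact ⟨∅, by simp, fun _ h => h.elim, by simp⟩
  let 𝒢 : Set (Set V) :=
    {G | G ⊆ R ∧ G.Finite ∧ α₀ ∈ G ∧ ((linkGraph B).induce G).Connected}
  have h𝒢 : DirectedOn (· ⊆ ·) 𝒢 := fun G₁ hG₁ G₂ hG₂ =>
    ⟨G₁ ∪ G₂, ⟨Set.union_subset hG₁.1 hG₂.1, hG₁.2.1.union hG₂.2.1, Or.inl hG₁.2.2.1,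
      SimpleGraph.induce_union_connected hG₁.2.2.2.preconnected hG₂.2.2.2.preconnected
        ⟨α₀, hG₁.2.2.1, hG₂.2.2.1⟩⟩, Set.subset_union_left, Set.subset_union_right⟩
  refine ⟨(fun G => R ∩ AddSubgroup.closure G) '' 𝒢, ?_, ?_, ?_, ?_⟩
  · rintro _ ⟨G, -, rfl⟩
    exact Set.inter_subset_left
  · exact h𝒢.mono_comp fun G₁ G₂ h =>
      Set.inter_subset_inter_right _ (AddSubgroup.closure_mono h)
  · refine (Set.sUnion_subset ?_).antisymm fun β hβ => ?_
    · rintro _ ⟨G, -, rfl⟩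
      exact Set.inter_subset_left
    obtain ⟨G, hGR, hGfin, hα₀G, hβG, hG⟩ := hR.exists_finite_connected hα₀ hβ
    exact ⟨_, ⟨G, ⟨hGR, hGfin, hα₀G, hG⟩, rfl⟩, hβ, AddSubgroup.subset_closure hβG⟩
  · rintro _ ⟨G, ⟨hGR, hGfin, -, hG⟩, rfl⟩
    exact hR.isFiniteRankEARS_inter_closure hsym hGfin hGR hG

/-- A LEARS is a directed union of extended affine root systems of finite rank. -/
theorem LEARS_is_directed_union_of_finite_rank_EARS
    {V : Type*} [AddCommGroup V] [Module ℚ V]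
    (B : LinearMap.BilinForm ℚ V)
    (hsym : ∀ x y : V, B x y = B y x)
    (hpos : ∀ x : V, 0 ≤ B x x)
    (R : Set V) (hR : IsLEARS B R) :
    ∃ 𝒮 : Set (Set V),
      (∀ R' ∈ 𝒮, R' ⊆ R) ∧
      DirectedOn (· ⊆ ·) 𝒮 ∧
      ⋃₀ 𝒮 = R ∧
      ∀ R' ∈ 𝒮,
        FiniteDimensional ℚ ↥(Submodule.span ℚ R') ∧
        IsLEARS (B.restrict (Submodule.span ℚ R'))
          {x : ↥(Submodule.span ℚ R') | (x : V) ∈ R'} ∧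
        Module.Free ℤ ↥(AddSubgroup.closure R') ∧
        Module.Finite ℤ ↥(AddSubgroup.closure R') :=
  LEARS_is_directed_union_of_finite_rank_EARS_general B hsym R hR
end

section
/- Let (R, V) be a LEARS with reflectable subspace V′ and associated data Δ and S_α as in the standard setup. Then 0 ∈ S_α for every α ∈ Δ whose image ᾱ lies in R̄^red; equivalently, every α ∈ V′ with ᾱ ∈ R̄^red belongs to R. -/
open Submodule

/-- The image `R̄` of `R` in `V̄ = V/V⁰`. -/
def Rbar {V : Type*} [AddCommGroup V] [Module ℚ V]
    (B : LinearMap.BilinForm ℚ V) (R : Set V) : Set (V ⧸ LinearMap.ker B) :=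
  (LinearMap.ker B).mkQ '' R

/-- `R̄^red = {ᾱ ∈ R̄ : ᾱ/2 ∉ R̄}` (which equals `R̄` when `R̄` is reduced). -/
def RbarRed {V : Type*} [AddCommGroup V] [Module ℚ V]
    (B : LinearMap.BilinForm ℚ V) (R : Set V) : Set (V ⧸ LinearMap.ker B) :=
  {a ∈ Rbar B R | (2 : ℚ)⁻¹ • a ∉ Rbar B R}

/-- `Δ = {α ∈ V′ : α + s ∈ R for some s ∈ V⁰}`, where `V′ = span ℚ P` is the reflectable
subspace determined by the set `P` of representatives of a reflectable base. -/
def DeltaSet {V : Type*} [AddCommGroup V] [Module ℚ V]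
    (B : LinearMap.BilinForm ℚ V) (R P : Set V) : Set V :=
  {α : V | α ∈ Submodule.span ℚ P ∧ ∃ s ∈ LinearMap.ker B, α + s ∈ R}

/-- `S_α = {s ∈ V⁰ : α + s ∈ R}`. -/
def transSet {V : Type*} [AddCommGroup V] [Module ℚ V]
    (B : LinearMap.BilinForm ℚ V) (R : Set V) (α : V) : Set V :=
  {s : V | s ∈ LinearMap.ker B ∧ α + s ∈ R}

/-- `G`, the subgroup of `V⁰` generated by `⋃_{α ∈ Δ} S_α`. -/
def Ggrp {V : Type*} [AddCommGroup V] [Module ℚ V]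
    (B : LinearMap.BilinForm ℚ V) (R P : Set V) : AddSubgroup V :=
  AddSubgroup.closure (⋃ α ∈ DeltaSet B R P, transSet B R α)

/-! A root of `R̄^red` is a word of base reflections applied to a base root. Applying the same
reflections to the chosen lifts in `P` stays inside `R` and inside `V′ = span P`, and produces a
lift of that root; since `V′ ∩ V⁰ = 0`, the lift in `V′` is unique, so it is the given `α`. -/

section Lifting

variable {V W : Type*} [AddCommGroup V] [Module ℚ V] [AddCommGroup W] [Module ℚ W]
  {B : LinearMap.BilinForm ℚ V} {B' : LinearMap.BilinForm ℚ W} {f : V →ₗ[ℚ] W}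

theorem IsLEARS.rroot_mem {R : Set V} (hR : IsLEARS B R) {α β : V} (hα : α ∈ R) (hβ : β ∈ R) :
    rroot B α β ∈ R :=
  hR.2.2.2.1 α hα β hβ

theorem map_rroot (hB : ∀ x y, B' (f x) (f y) = B x y) (γ x : V) :
    f (rroot B γ x) = rroot B' (f γ) (f x) := by
  simp only [rroot, map_sub, map_smul, hB]

theorem exists_mem_span_map_eq_foldr_rroot (hB : ∀ x y, B' (f x) (f y) = B x y)
    {R P : Set V} (hPR : P ⊆ R) (hrefl : ∀ ⦃α β⦄, α ∈ R → β ∈ R → rroot B α β ∈ R)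
    {l : List W} (hl : ∀ γ ∈ l, γ ∈ f '' P) {b : V} (hb : b ∈ P) :
    ∃ β ∈ R, β ∈ span ℚ P ∧ f β = l.foldr (rroot B') (f b) := by
  induction l with
  | nil => exact ⟨b, hPR hb, subset_span hb, rfl⟩
  | cons γ l ih =>
    obtain ⟨β, hβR, hβP, hβ⟩ := ih fun x hx => hl x (List.mem_cons_of_mem _ hx)
    obtain ⟨g, hgP, rfl⟩ := hl γ List.mem_cons_self
    refine ⟨rroot B g β, hrefl (hPR hgP) hβR, ?_, ?_⟩
    · exact sub_mem hβP (smul_mem _ _ (subset_span hgP))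
    · rw [map_rroot hB, hβ, List.foldr_cons]

end Lifting

theorem LinearIndepOn.injOn_span {R M M' : Type*} [Ring R] [AddCommGroup M] [Module R M]
    [AddCommGroup M'] [Module R M'] {f : M →ₗ[R] M'} {s : Set M} (hs : LinearIndepOn R f s) :
    Set.InjOn f (span R s) := by
  have hdisj := Submodule.range_ker_disjoint (v := ((↑) : s → M)) hs
  rw [Subtype.range_coe] at hdisj
  exact LinearMap.disjoint_ker_iff_injOn.mp hdisj

theorem zero_mem_transSet_of_red_general
    {V : Type*} [AddCommGroup V] [Module ℚ V]
    (B : LinearMap.BilinForm ℚ V)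
    (R : Set V) (hR : IsLEARS B R)
    (Bbar : LinearMap.BilinForm ℚ (V ⧸ LinearMap.ker B))
    (hBbar : ∀ x y : V,
      Bbar ((LinearMap.ker B).mkQ x) ((LinearMap.ker B).mkQ y) = B x y)
    (P : Set V) (hPR : P ⊆ R)
    (hinj : Set.InjOn (LinearMap.ker B).mkQ P)
    (hli : LinearIndependent ℚ
      ((↑) : ((LinearMap.ker B).mkQ '' P) → V ⧸ LinearMap.ker B))
    (hreflbase : ∀ a ∈ RbarRed B R,
      ∃ (l : List (V ⧸ LinearMap.ker B)) (b : V ⧸ LinearMap.ker B),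
        (∀ γ ∈ l, γ ∈ (LinearMap.ker B).mkQ '' P) ∧
        b ∈ (LinearMap.ker B).mkQ '' P ∧
        a = l.foldr (rroot Bbar) b)
    :
    ∀ α ∈ Submodule.span ℚ P, (LinearMap.ker B).mkQ α ∈ RbarRed B R → α ∈ R := by
  set π := (LinearMap.ker B).mkQ
  have hinjOn : Set.InjOn π (span ℚ P) :=
    ((linearIndepOn_iff_image hinj).mpr hli).injOn_span
  intro α hα hαred
  obtain ⟨l, _, hl, ⟨b, hb, rfl⟩, hαl⟩ := hreflbase _ hαred
  obtain ⟨β, hβR, hβP, hβl⟩ :=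
    exists_mem_span_map_eq_foldr_rroot hBbar hPR (fun _ _ => hR.rroot_mem) hl hb
  rwa [hinjOn hα hβP (hαl.trans hβl.symm)]

/-- (S2): every element of the reflectable subspace whose image lies in R̄^red belongs to R;
equivalently `0 ∈ S_α` for all such `α ∈ Δ`. -/
theorem zero_mem_transSet_of_red
    {V : Type*} [AddCommGroup V] [Module ℚ V]
    (B : LinearMap.BilinForm ℚ V)
    (hsym : ∀ x y : V, B x y = B y x)
    (hpos : ∀ x : V, 0 ≤ B x x)
    (R : Set V) (hR : IsLEARS B R)
    (Bbar : LinearMap.BilinForm ℚ (V ⧸ LinearMap.ker B))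
    (hBbar : ∀ x y : V,
      Bbar ((LinearMap.ker B).mkQ x) ((LinearMap.ker B).mkQ y) = B x y)
    (P : Set V) (hPR : P ⊆ R)
    (hinj : Set.InjOn (LinearMap.ker B).mkQ P)
    (hPred : (LinearMap.ker B).mkQ '' P ⊆ RbarRed B R)
    (hli : LinearIndependent ℚ
      ((↑) : ((LinearMap.ker B).mkQ '' P) → V ⧸ LinearMap.ker B))
    (hspan : Submodule.span ℚ ((LinearMap.ker B).mkQ '' P) = ⊤)
    (hreflbase : ∀ a ∈ RbarRed B R,
      ∃ (l : List (V ⧸ LinearMap.ker B)) (b : V ⧸ LinearMap.ker B),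
        (∀ γ ∈ l, γ ∈ (LinearMap.ker B).mkQ '' P) ∧
        b ∈ (LinearMap.ker B).mkQ '' P ∧
        a = l.foldr (rroot Bbar) b)
    :
    ∀ α ∈ Submodule.span ℚ P, (LinearMap.ker B).mkQ α ∈ RbarRed B R → α ∈ R :=
  zero_mem_transSet_of_red_general B R hR Bbar hBbar P hPR hinj hli hreflbase
end

section
/- Let (R, V) be a LEARS with reflectable subspace V′ and associated data Δ and S_α as in the standard setup. If α, β ∈ Δ satisfy (α, α) = (β, β), then S_α = S_β; that is, the translation set S_α depends only on the length of the root α. -/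
open Submodule

/-! Every `γ ∈ Δ` has a nonzero multiple in `R` (by the reflectable base, `γ` or `γ/2`), and
`σ_γ (α + s) = σ_γ α + s` for `s ∈ V⁰`; hence reflections in elements of `Δ` preserve `Δ`, lengths
and translation sets. Two non-orthogonal elements of `Δ` of equal length have Cartan integer
`±1` or `±2` by Cauchy–Schwarz, so they are related by reflections and `α ↦ -α = σ_α α`.
Irreducibility of `R` then connects any two elements of `Δ` of equal length through such steps. -/

section

variable {V : Type*} [AddCommGroup V] [Module ℚ V] {B : LinearMap.BilinForm ℚ V}
  {R P : Set V}

lemma apply_eq_apply_of_sub_mem_ker_left {x x' : V} (hx : x - x' ∈ LinearMap.ker B) (y : V) :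
    B x y = B x' y := by
  rw [← sub_eq_zero, ← LinearMap.sub_apply, ← map_sub, LinearMap.mem_ker.1 hx]
  rfl

lemma apply_eq_apply_of_sub_mem_ker (hB : B.IsSymm) {x x' y y' : V}
    (hx : x - x' ∈ LinearMap.ker B) (hy : y - y' ∈ LinearMap.ker B) : B x y = B x' y' := by
  rw [apply_eq_apply_of_sub_mem_ker_left hx, hB.eq, apply_eq_apply_of_sub_mem_ker_left hy, hB.eq]

lemma disjoint_span_ker (hinj : Set.InjOn (LinearMap.ker B).mkQ P)
    (hli : LinearIndependent ℚ
      ((↑) : ((LinearMap.ker B).mkQ '' P) → V ⧸ LinearMap.ker B)) :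
    Disjoint (span ℚ P) (LinearMap.ker B) := by
  have h := Submodule.range_ker_disjoint (f := (LinearMap.ker B).mkQ) (v := ((↑) : P → V))
    ((linearIndepOn_iff_image hinj).2 hli)
  rwa [Subtype.range_coe, Submodule.ker_mkQ] at h

lemma eq_of_mem_span_of_sub_mem_ker (hdisj : Disjoint (span ℚ P) (LinearMap.ker B))
    {x y : V} (hx : x ∈ span ℚ P) (hy : y ∈ span ℚ P) (hxy : x - y ∈ LinearMap.ker B) :
    x = y :=
  sub_eq_zero.1 <| Submodule.disjoint_def.1 hdisj _ (sub_mem hx hy) hxy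

lemma exists_mem_span_sub_mem_ker
    (hspan : span ℚ ((LinearMap.ker B).mkQ '' P) = ⊤) (v : V) :
    ∃ w ∈ span ℚ P, v - w ∈ LinearMap.ker B := by
  have hv : (LinearMap.ker B).mkQ v ∈ (span ℚ P).map (LinearMap.ker B).mkQ := by
    rw [← Submodule.span_image, hspan]; trivial
  obtain ⟨w, hw, hwv⟩ := hv
  exact ⟨w, hw, (Submodule.Quotient.eq _).1 hwv.symm⟩

lemma mem_deltaSet_of_sub_mem_ker {α r : V} (hα : α ∈ span ℚ P) (hr : r ∈ R)
    (hrα : r - α ∈ LinearMap.ker B) : α ∈ DeltaSet B R P :=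
  ⟨hα, r - α, hrα, by rwa [add_sub_cancel]⟩

lemma apply_self_ne_zero_of_mem_deltaSet (hB : B.IsSymm) (hR : IsLEARS B R) {α : V}
    (hα : α ∈ DeltaSet B R P) : B α α ≠ 0 := by
  obtain ⟨-, s, hs, hαs⟩ := hα
  have hsα : α + s - α ∈ LinearMap.ker B := by rwa [add_sub_cancel_left]
  rw [← apply_eq_apply_of_sub_mem_ker hB hsα hsα]
  exact hR.1 _ hαs

lemma exists_int_of_mem_deltaSet (hB : B.IsSymm) (hR : IsLEARS B R) {α β : V}
    (hα : α ∈ DeltaSet B R P) (hβ : β ∈ DeltaSet B R P) :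
    ∃ n : ℤ, 2 * B α β / B β β = n := by
  obtain ⟨-, s, hs, hαs⟩ := hα
  obtain ⟨-, t, ht, hβt⟩ := hβ
  have hsα : α + s - α ∈ LinearMap.ker B := by rwa [add_sub_cancel_left]
  have htβ : β + t - β ∈ LinearMap.ker B := by rwa [add_sub_cancel_left]
  rw [← apply_eq_apply_of_sub_mem_ker hB hsα htβ, ← apply_eq_apply_of_sub_mem_ker hB htβ htβ]
  exact hR.2.2.1 _ hαs _ hβt

lemma mkQ_rroot {Bbar : LinearMap.BilinForm ℚ (V ⧸ LinearMap.ker B)}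
    (hBbar : ∀ x y : V,
      Bbar ((LinearMap.ker B).mkQ x) ((LinearMap.ker B).mkQ y) = B x y) (γ x : V) :
    (LinearMap.ker B).mkQ (rroot B γ x) =
      rroot Bbar ((LinearMap.ker B).mkQ γ) ((LinearMap.ker B).mkQ x) := by
  rw [rroot, rroot, map_sub, map_smul, hBbar, hBbar]

lemma exists_mem_span_mkQ_eq_foldr_rroot (hR : IsLEARS B R)
    {Bbar : LinearMap.BilinForm ℚ (V ⧸ LinearMap.ker B)}
    (hBbar : ∀ x y : V,
      Bbar ((LinearMap.ker B).mkQ x) ((LinearMap.ker B).mkQ y) = B x y)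
    (hPR : P ⊆ R) {l : List (V ⧸ LinearMap.ker B)}
    (hl : ∀ γ ∈ l, γ ∈ (LinearMap.ker B).mkQ '' P) {p : V} (hp : p ∈ P) :
    ∃ x ∈ span ℚ P, x ∈ R ∧
      (LinearMap.ker B).mkQ x = l.foldr (rroot Bbar) ((LinearMap.ker B).mkQ p) := by
  induction l with
  | nil => exact ⟨p, subset_span hp, hPR hp, rfl⟩
  | cons a l ih =>
    obtain ⟨x, hxP, hxR, hxq⟩ := ih fun γ hγ => hl γ (List.mem_cons_of_mem a hγ)
    obtain ⟨γ, hγP, rfl⟩ := hl a List.mem_cons_self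
    refine ⟨rroot B γ x, sub_mem hxP (smul_mem _ _ (subset_span hγP)),
      hR.2.2.2.1 _ (hPR hγP) _ hxR, ?_⟩
    rw [List.foldr_cons, ← hxq, mkQ_rroot hBbar]

lemma mem_of_mem_deltaSet_of_mkQ_mem_rbarRed (hR : IsLEARS B R)
    {Bbar : LinearMap.BilinForm ℚ (V ⧸ LinearMap.ker B)}
    (hBbar : ∀ x y : V,
      Bbar ((LinearMap.ker B).mkQ x) ((LinearMap.ker B).mkQ y) = B x y)
    (hPR : P ⊆ R) (hdisj : Disjoint (span ℚ P) (LinearMap.ker B))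
    (hreflbase : ∀ a ∈ RbarRed B R,
      ∃ (l : List (V ⧸ LinearMap.ker B)) (b : V ⧸ LinearMap.ker B),
        (∀ γ ∈ l, γ ∈ (LinearMap.ker B).mkQ '' P) ∧
        b ∈ (LinearMap.ker B).mkQ '' P ∧
        a = l.foldr (rroot Bbar) b)
    {α : V} (hα : α ∈ DeltaSet B R P) (hred : (LinearMap.ker B).mkQ α ∈ RbarRed B R) :
    α ∈ R := by
  obtain ⟨l, _, hl, ⟨p, hp, rfl⟩, hfold⟩ := hreflbase _ hred
  obtain ⟨x, hxP, hxR, hxq⟩ := exists_mem_span_mkQ_eq_foldr_rroot hR hBbar hPR hl hp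
  rw [← hfold] at hxq
  rwa [← eq_of_mem_span_of_sub_mem_ker hdisj hxP hα.1 ((Submodule.Quotient.eq _).1 hxq)]

lemma smul_mem_deltaSet {α : V} (hα : α ∈ span ℚ P) {c : ℚ}
    (hc : c • (LinearMap.ker B).mkQ α ∈ Rbar B R) : c • α ∈ DeltaSet B R P := by
  obtain ⟨r, hr, hrα⟩ := hc
  rw [← map_smul] at hrα
  exact mem_deltaSet_of_sub_mem_ker (smul_mem _ _ hα) hr ((Submodule.Quotient.eq _).1 hrα)

/-- If `ᾱ ∉ R̄^red` then `ᾱ/2 ∈ R̄^red`, because `ᾱ/4 ∉ R̄` as `⟨α/4, α⟩ = 1/2`. -/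
lemma exists_smul_mem_of_mem_deltaSet (hB : B.IsSymm) (hR : IsLEARS B R)
    (hmem : ∀ x ∈ DeltaSet B R P, (LinearMap.ker B).mkQ x ∈ RbarRed B R → x ∈ R)
    {α : V} (hα : α ∈ DeltaSet B R P) : ∃ c : ℚ, c ≠ 0 ∧ c • α ∈ R := by
  by_cases hred : (LinearMap.ker B).mkQ α ∈ RbarRed B R
  · exact ⟨1, one_ne_zero, by rw [one_smul]; exact hmem α hα hred⟩
  have hbar : (LinearMap.ker B).mkQ α ∈ Rbar B R := by
    obtain ⟨-, s, hs, hαs⟩ := hα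
    exact ⟨α + s, hαs, (Submodule.Quotient.eq _).2 (by rwa [add_sub_cancel_left])⟩
  have hhalf : (2⁻¹ : ℚ) • (LinearMap.ker B).mkQ α ∈ Rbar B R := by
    by_contra h
    exact hred ⟨hbar, h⟩
  refine ⟨2⁻¹, by norm_num, hmem _ (smul_mem_deltaSet hα.1 hhalf) ⟨by rwa [map_smul], ?_⟩⟩
  intro hquarter
  rw [map_smul, smul_smul] at hquarter
  obtain ⟨n, hn⟩ := exists_int_of_mem_deltaSet hB hR (smul_mem_deltaSet hα.1 hquarter) hα
  have hαα := apply_self_ne_zero_of_mem_deltaSet hB hR hα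
  rw [map_smul, LinearMap.smul_apply, smul_eq_mul] at hn
  have h2n : ((2 * n : ℤ) : ℚ) = 1 := by
    rw [Int.cast_mul, ← hn]; field_simp; norm_num
  have : 2 * n = 1 := by exact_mod_cast h2n
  omega

lemma rroot_smul {c : ℚ} (hc : c ≠ 0) (γ x : V) : rroot B (c • γ) x = rroot B γ x := by
  rcases eq_or_ne (B γ γ) 0 with hγ | hγ
  · simp [rroot, hγ]
  · simp only [rroot, map_smul, LinearMap.smul_apply, smul_eq_mul, smul_smul]
    congr 2
    field_simp

lemma rroot_add_of_mem_ker {s : V} (hs : s ∈ LinearMap.ker B) (γ x : V) :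
    rroot B γ (x + s) = rroot B γ x + s := by
  have hsγ : B s γ = 0 := by rw [LinearMap.mem_ker.1 hs]; rfl
  rw [rroot, rroot, map_add, LinearMap.add_apply, hsγ, add_zero]
  abel

lemma rroot_rroot {γ : V} (hγ : B γ γ ≠ 0) (x : V) : rroot B γ (rroot B γ x) = x := by
  simp only [rroot, map_sub, map_smul, LinearMap.sub_apply, LinearMap.smul_apply, smul_eq_mul]
  rw [sub_sub, ← add_smul, sub_eq_self]
  convert zero_smul ℚ γ
  field_simp
  ring

lemma apply_rroot_rroot (hB : B.IsSymm) {γ : V} (hγ : B γ γ ≠ 0) (x : V) :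
    B (rroot B γ x) (rroot B γ x) = B x x := by
  simp only [rroot, map_sub, map_smul, LinearMap.sub_apply, LinearMap.smul_apply, smul_eq_mul]
  rw [hB.eq γ x]
  field_simp
  ring

lemma transSet_rroot_of_mem (hR : IsLEARS B R) {γ : V} (hγ : γ ∈ R) (α : V) :
    transSet B R (rroot B γ α) = transSet B R α := by
  have hsub : ∀ x, transSet B R x ⊆ transSet B R (rroot B γ x) := fun x s ⟨hs, hxs⟩ =>
    ⟨hs, rroot_add_of_mem_ker hs γ x ▸ hR.2.2.2.1 _ hγ _ hxs⟩
  refine (hsub α).antisymm' ?_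
  simpa only [rroot_rroot (hR.1 γ hγ)] using hsub (rroot B γ α)

lemma rroot_self {α : V} (hα : B α α ≠ 0) : rroot B α α = -α := by
  rw [rroot, mul_div_assoc, div_self hα, mul_one, two_smul, sub_add_cancel_left]

section Anchored

variable (hR : IsLEARS B R) (hanchor : ∀ γ ∈ DeltaSet B R P, ∃ c : ℚ, c ≠ 0 ∧ c • γ ∈ R)
include hR hanchor

lemma transSet_rroot {γ : V} (hγ : γ ∈ DeltaSet B R P) (α : V) :
    transSet B R (rroot B γ α) = transSet B R α := by
  obtain ⟨c, hc, hcγ⟩ := hanchor γ hγ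
  rw [← rroot_smul hc, transSet_rroot_of_mem hR hcγ]

lemma rroot_mem_deltaSet {γ α : V} (hγ : γ ∈ DeltaSet B R P) (hα : α ∈ DeltaSet B R P) :
    rroot B γ α ∈ DeltaSet B R P := by
  obtain ⟨s, hs⟩ : (transSet B R α).Nonempty := hα.2
  rw [← transSet_rroot hR hanchor hγ α] at hs
  exact ⟨sub_mem hα.1 (smul_mem _ _ hγ.1), s, hs⟩

lemma neg_mem_deltaSet (hB : B.IsSymm) {α : V} (hα : α ∈ DeltaSet B R P) :
    -α ∈ DeltaSet B R P := by
  rw [← rroot_self (apply_self_ne_zero_of_mem_deltaSet hB hR hα)]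
  exact rroot_mem_deltaSet hR hanchor hα hα

lemma transSet_neg (hB : B.IsSymm) {α : V} (hα : α ∈ DeltaSet B R P) :
    transSet B R (-α) = transSet B R α := by
  rw [← rroot_self (apply_self_ne_zero_of_mem_deltaSet hB hR hα), transSet_rroot hR hanchor hα]

/-- With `n = ⟨α, β⟩`, Cauchy–Schwarz leaves `n = -1`, where `σ_β α = α + β = σ_α β`, and
`n = -2`, where `α + β` is isotropic, hence radical, hence `β = -α`. -/
lemma transSet_eq_of_apply_neg (hB : B.IsSymm) (hpos : ∀ x : V, 0 ≤ B x x)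
    (hdisj : Disjoint (span ℚ P) (LinearMap.ker B))
    {α β : V} (hα : α ∈ DeltaSet B R P) (hβ : β ∈ DeltaSet B R P)
    (hlen : B α α = B β β) (hneg : B α β < 0) : transSet B R α = transSet B R β := by
  have hB' := LinearMap.BilinForm.isSymm_iff.1 hB
  obtain ⟨n, hn⟩ := exists_int_of_mem_deltaSet hB hR hα hβ
  have hL : 0 < B β β := (hpos β).lt_of_ne' (apply_self_ne_zero_of_mem_deltaSet hB hR hβ)
  have hαβ : 2 * B α β = n * B β β := (div_eq_iff hL.ne').1 hn
  have hcs := B.apply_sq_le_of_symm hpos hB' α β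
  rw [hlen] at hcs
  have hn_neg : (n : ℚ) < 0 := by nlinarith
  have hn_sq : (n : ℚ) ^ 2 ≤ 4 := by
    refine le_of_mul_le_mul_right ?_ (pow_pos hL 2)
    nlinarith
  have hn_ge : (-2 : ℚ) ≤ n := by nlinarith
  obtain rfl | rfl : n = -1 ∨ n = -2 := by
    have : n < 0 := by exact_mod_cast hn_neg
    have : -2 ≤ n := by exact_mod_cast hn_ge
    omega
  · have hβα : 2 * B β α / B α α = -1 := by rw [hB.eq, hlen, hn]; norm_num
    have hsum : rroot B β α = rroot B α β := by
      rw [rroot, rroot, hn, hβα, Int.cast_neg, Int.cast_one, neg_one_smul, neg_one_smul,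
        sub_neg_eq_add, sub_neg_eq_add, add_comm]
    rw [← transSet_rroot hR hanchor hβ α, hsum, transSet_rroot hR hanchor hα β]
  · have hiso : B (α + β) (α + β) = 0 := by
      simp only [map_add, LinearMap.add_apply]
      rw [hB.eq β α]
      push_cast at hαβ
      linarith
    have hαβ_eq : α = -β := by
      refine eq_of_mem_span_of_sub_mem_ker hdisj hα.1 (neg_mem hβ.1) ?_
      rwa [sub_neg_eq_add, ← B.apply_apply_same_eq_zero_iff hpos hB']
    rw [hαβ_eq, transSet_neg hR hanchor hB hβ]

lemma transSet_eq_of_apply_ne_zero (hB : B.IsSymm) (hpos : ∀ x : V, 0 ≤ B x x)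
    (hdisj : Disjoint (span ℚ P) (LinearMap.ker B))
    {α β : V} (hα : α ∈ DeltaSet B R P) (hβ : β ∈ DeltaSet B R P)
    (hlen : B α α = B β β) (hne : B α β ≠ 0) : transSet B R α = transSet B R β := by
  rcases hne.lt_or_gt with hneg | hpos'
  · exact transSet_eq_of_apply_neg hR hanchor hB hpos hdisj hα hβ hlen hneg
  · rw [← transSet_neg hR hanchor hB hβ]
    refine transSet_eq_of_apply_neg hR hanchor hB hpos hdisj hα
      (neg_mem_deltaSet hR hanchor hB hβ) ?_ ?_
    · simpa only [map_neg, LinearMap.neg_apply, neg_neg]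
    · rwa [map_neg, neg_lt_zero]

/-- The class `O` of `α` is stable under the reflections `σ_γ`, `γ ∈ Δ`, so a root pairing
nontrivially with some `x ∈ O` cannot pair nontrivially with a root `r₂ ⊥ O`: otherwise
`(r₂, σ_γ x) ≠ 0` for the projection `γ ∈ Δ` of `r₁`. Irreducibility then forces `R ⊥ O = ∅`. -/
lemma exists_transSet_eq_and_apply_ne_zero (hB : B.IsSymm)
    (hspan : span ℚ ((LinearMap.ker B).mkQ '' P) = ⊤) {α : V} (hα : α ∈ DeltaSet B R P)
    {r : V} (hr : r ∈ R) :
    ∃ x ∈ DeltaSet B R P, B x x = B α α ∧ transSet B R x = transSet B R α ∧ B r x ≠ 0 := by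
  set O : Set V :=
    {x | x ∈ DeltaSet B R P ∧ B x x = B α α ∧ transSet B R x = transSet B R α}
  have hO : ∀ γ ∈ DeltaSet B R P, ∀ x ∈ O, rroot B γ x ∈ O := by
    rintro γ hγ x ⟨hx, hxlen, hxS⟩
    refine ⟨rroot_mem_deltaSet hR hanchor hγ hx, ?_, ?_⟩
    · rw [apply_rroot_rroot hB (apply_self_ne_zero_of_mem_deltaSet hB hR hγ), hxlen]
    · rw [transSet_rroot hR hanchor hγ, hxS]
  have horth : ∀ r₁ ∈ {r ∈ R | ∃ x ∈ O, B r x ≠ 0}, ∀ r₂ ∈ {r ∈ R | ∀ x ∈ O, B r x = 0},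
      B r₁ r₂ = 0 := by
    rintro r₁ ⟨hr₁, x, hx, hr₁x⟩ r₂ ⟨-, hr₂⟩
    by_contra hr₁r₂
    obtain ⟨γ, hγP, hr₁γ⟩ := exists_mem_span_sub_mem_ker hspan r₁
    have hγ : γ ∈ DeltaSet B R P := mem_deltaSet_of_sub_mem_ker hγP hr₁ hr₁γ
    have hxγ : B x γ ≠ 0 := by
      rwa [hB.eq, ← apply_eq_apply_of_sub_mem_ker_left hr₁γ]
    have hr₂γ : B r₂ γ ≠ 0 := by
      rwa [hB.eq, ← apply_eq_apply_of_sub_mem_ker_left hr₁γ]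
    have hr₂σx : B r₂ (rroot B γ x) = -(2 * B x γ / B γ γ) * B r₂ γ := by
      simp only [rroot, map_sub, map_smul, smul_eq_mul, hr₂ x hx]
      ring
    refine mul_ne_zero (neg_ne_zero.2 (div_ne_zero (mul_ne_zero two_ne_zero hxγ)
      (apply_self_ne_zero_of_mem_deltaSet hB hR hγ))) hr₂γ ?_
    rw [← hr₂σx, hr₂ _ (hO γ hγ x hx)]
  have hsplit : R = {r ∈ R | ∃ x ∈ O, B r x ≠ 0} ∪ {r ∈ R | ∀ x ∈ O, B r x = 0} := by
    ext r
    refine ⟨fun hr => ?_, by rintro (⟨hr, -⟩ | ⟨hr, -⟩) <;> exact hr⟩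
    by_cases h : ∃ x ∈ O, B r x ≠ 0
    · exact Or.inl ⟨hr, h⟩
    · exact Or.inr ⟨hr, fun x hx => not_not.1 fun hne => h ⟨x, hx, hne⟩⟩
  rcases hR.2.2.2.2 _ _ hsplit horth with h | h
  · obtain ⟨s, hs, hαs⟩ := hα.2
    have hmem : α + s ∈ {r ∈ R | ∃ x ∈ O, B r x ≠ 0} := by
      refine ⟨hαs, α, ⟨hα, rfl, rfl⟩, ?_⟩
      rw [apply_eq_apply_of_sub_mem_ker_left (by rwa [add_sub_cancel_left])]
      exact apply_self_ne_zero_of_mem_deltaSet hB hR hα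
    simp [h] at hmem
  · by_contra hno
    have hmem : r ∈ {r ∈ R | ∀ x ∈ O, B r x = 0} :=
      ⟨hr, fun x ⟨hx, hxlen, hxS⟩ => not_not.1 fun h => hno ⟨x, hx, hxlen, hxS, h⟩⟩
    simp [h] at hmem

end Anchored

end

theorem transSet_eq_of_length_eq_general
    {V : Type*} [AddCommGroup V] [Module ℚ V]
    (B : LinearMap.BilinForm ℚ V)
    (hsym : ∀ x y : V, B x y = B y x)
    (hpos : ∀ x : V, 0 ≤ B x x)
    (R : Set V) (hR : IsLEARS B R)
    (Bbar : LinearMap.BilinForm ℚ (V ⧸ LinearMap.ker B))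
    (hBbar : ∀ x y : V,
      Bbar ((LinearMap.ker B).mkQ x) ((LinearMap.ker B).mkQ y) = B x y)
    (P : Set V) (hPR : P ⊆ R)
    (hinj : Set.InjOn (LinearMap.ker B).mkQ P)
    (hli : LinearIndependent ℚ
      ((↑) : ((LinearMap.ker B).mkQ '' P) → V ⧸ LinearMap.ker B))
    (hspan : Submodule.span ℚ ((LinearMap.ker B).mkQ '' P) = ⊤)
    (hreflbase : ∀ a ∈ RbarRed B R,
      ∃ (l : List (V ⧸ LinearMap.ker B)) (b : V ⧸ LinearMap.ker B),
        (∀ γ ∈ l, γ ∈ (LinearMap.ker B).mkQ '' P) ∧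
        b ∈ (LinearMap.ker B).mkQ '' P ∧
        a = l.foldr (rroot Bbar) b)
    :
    ∀ α ∈ DeltaSet B R P, ∀ β ∈ DeltaSet B R P,
      B α α = B β β → transSet B R α = transSet B R β := by
  intro α hα β hβ hlen
  have hB : B.IsSymm := LinearMap.BilinForm.isSymm_def.2 hsym
  have hdisj := disjoint_span_ker hinj hli
  have hanchor : ∀ γ ∈ DeltaSet B R P, ∃ c : ℚ, c ≠ 0 ∧ c • γ ∈ R :=
    fun γ => exists_smul_mem_of_mem_deltaSet hB hR fun x =>
      mem_of_mem_deltaSet_of_mkQ_mem_rbarRed hR hBbar hPR hdisj hreflbase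
  obtain ⟨t, ht, hβt⟩ := hβ.2
  obtain ⟨x, hx, hxlen, hxS, hβx⟩ :=
    exists_transSet_eq_and_apply_ne_zero hR hanchor hB hspan hα hβt
  rw [apply_eq_apply_of_sub_mem_ker_left (by rwa [add_sub_cancel_left])] at hβx
  rw [← hxS]
  exact (transSet_eq_of_apply_ne_zero hR hanchor hB hpos hdisj hβ hx
    (hxlen.trans hlen).symm hβx).symm

/-- The translation set `S_α` depends only on the length of `α ∈ Δ`. -/
theorem transSet_eq_of_length_eq
    {V : Type*} [AddCommGroup V] [Module ℚ V]
    (B : LinearMap.BilinForm ℚ V)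
    (hsym : ∀ x y : V, B x y = B y x)
    (hpos : ∀ x : V, 0 ≤ B x x)
    (R : Set V) (hR : IsLEARS B R)
    (Bbar : LinearMap.BilinForm ℚ (V ⧸ LinearMap.ker B))
    (hBbar : ∀ x y : V,
      Bbar ((LinearMap.ker B).mkQ x) ((LinearMap.ker B).mkQ y) = B x y)
    (P : Set V) (hPR : P ⊆ R)
    (hinj : Set.InjOn (LinearMap.ker B).mkQ P)
    (hPred : (LinearMap.ker B).mkQ '' P ⊆ RbarRed B R)
    (hli : LinearIndependent ℚ
      ((↑) : ((LinearMap.ker B).mkQ '' P) → V ⧸ LinearMap.ker B))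
    (hspan : Submodule.span ℚ ((LinearMap.ker B).mkQ '' P) = ⊤)
    (hreflbase : ∀ a ∈ RbarRed B R,
      ∃ (l : List (V ⧸ LinearMap.ker B)) (b : V ⧸ LinearMap.ker B),
        (∀ γ ∈ l, γ ∈ (LinearMap.ker B).mkQ '' P) ∧
        b ∈ (LinearMap.ker B).mkQ '' P ∧
        a = l.foldr (rroot Bbar) b)
    :
    ∀ α ∈ DeltaSet B R P, ∀ β ∈ DeltaSet B R P,
      B α α = B β β → transSet B R α = transSet B R β :=
  transSet_eq_of_length_eq_general B hsym hpos R hR Bbar hBbar P hPR hinj hli hspan hreflbase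
end

section
/- Let (R, V) be a LEARS with reflectable subspace V′ and associated data Δ, S_α, and G as in the standard setup. Then the subgroup ⟨R⟩ generated by R is the internal direct sum of ⟨Δ⟩ and G: every element of ⟨R⟩ is uniquely the sum of an element of ⟨Δ⟩ and an element of G. In particular, ⟨R⟩ ∩ V⁰ = G. -/
open Submodule

/-!
Since the classes of `P` form a basis of `V̄`, `V = V′ ⊕ V⁰` with `V′ = span P`. Splitting each
root as `α + s` with `α ∈ V′`, `s ∈ V⁰` gives `⟨R⟩ ⊆ ⟨Δ⟩ + G`, and uniqueness of the sum is
`V′ ∩ V⁰ = 0`. The real point is `G ⊆ ⟨R⟩`, i.e. `Δ ⊆ ⟨R⟩`. For `α ∈ Δ`, either `ᾱ` or `ᾱ/2`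
lies in `R̄^red`, since `ᾱ/4` is never a root (its Cartan integer against `ᾱ` would be `1/2`).
An element of `V′` whose class lies in `R̄^red` is itself a root: reflections in roots of `P`
lift to `R ∩ V′`, and `V′ → V̄` is injective. Hence `α` or `α/2` is a root, and `s = (α + s) - α`.
-/

namespace Submodule

variable {R M M' : Type*} [Ring R] [AddCommGroup M] [AddCommGroup M'] [Module R M]
  [Module R M'] {f : M →ₗ[R] M'} {s : Set M}

theorem disjoint_span_ker_of_linearIndependent_image (hinj : Set.InjOn f s)
    (hli : LinearIndependent R ((↑) : f '' s → M')) :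
    Disjoint (span R s) (LinearMap.ker f) := by
  have hfs : LinearIndependent R (f ∘ ((↑) : s → M)) := (linearIndepOn_iff_image hinj).mpr hli
  simpa only [Subtype.range_coe] using range_ker_disjoint hfs

theorem span_sup_ker_eq_top_of_span_image (hspan : span R (f '' s) = ⊤) :
    span R s ⊔ LinearMap.ker f = ⊤ := by
  rw [← comap_map_eq, map_span, hspan, comap_top]

end Submodule

section LEARS

open LinearMap (ker)

variable {V : Type*} [AddCommGroup V] [Module ℚ V] {B : LinearMap.BilinForm ℚ V} {R : Set V}

theorem map_rroot_s7 {W : Type*} [AddCommGroup W] [Module ℚ W] {B' : LinearMap.BilinForm ℚ W}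
    (f : V →ₗ[ℚ] W) (hf : ∀ x y, B' (f x) (f y) = B x y) (α x : V) :
    f (rroot B α x) = rroot B' (f α) (f x) := by
  simp only [rroot, map_sub, map_smul, hf]

namespace IsLEARS

variable (hR : IsLEARS B R)
include hR

theorem apply_self_ne_zero {α : V} (hα : α ∈ R) : B α α ≠ 0 := hR.1 α hα

theorem exists_int_eq_two_mul_div {α β : V} (hα : α ∈ R) (hβ : β ∈ R) :
    ∃ n : ℤ, 2 * B α β / B β β = n :=
  hR.2.2.1 α hα β hβ

theorem rroot_mem_s7 {α β : V} (hα : α ∈ R) (hβ : β ∈ R) : rroot B α β ∈ R :=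
  hR.2.2.2.1 α hα β hβ

theorem inv_four_smul_mkQ_notMem_rbar {γ : V} (hγ : γ ∈ R) :
    (4 : ℚ)⁻¹ • (ker B).mkQ γ ∉ Rbar B R := by
  rintro ⟨δ, hδ, hδγ⟩
  have hker : δ - (4 : ℚ)⁻¹ • γ ∈ ker B := by
    rw [← Submodule.Quotient.mk_eq_zero, Submodule.Quotient.mk_sub, Submodule.Quotient.mk_smul]
    exact sub_eq_zero.2 hδγ
  have hδγ' : B δ γ = (4 : ℚ)⁻¹ * B γ γ := by
    have := congrArg (· γ) (LinearMap.mem_ker.1 hker)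
    simpa [sub_eq_zero] using this
  obtain ⟨n, hn⟩ := hR.exists_int_eq_two_mul_div hδ hγ
  have h2n : ((2 * n : ℤ) : ℚ) = (1 : ℤ) := by
    rw [Int.cast_mul, ← hn, hδγ']
    field_simp [hR.apply_self_ne_zero hγ]
    norm_num
  exact absurd (Int.cast_injective h2n) (by omega)

theorem mem_rbarRed_or_inv_two_smul_mem_rbarRed {a : V ⧸ ker B} (ha : a ∈ Rbar B R) :
    a ∈ RbarRed B R ∨ (2 : ℚ)⁻¹ • a ∈ RbarRed B R := by
  by_cases hred : a ∈ RbarRed B R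
  · exact Or.inl hred
  have hhalf : (2 : ℚ)⁻¹ • a ∈ Rbar B R := by
    by_contra h
    exact hred ⟨ha, h⟩
  obtain ⟨γ, hγ, rfl⟩ := ha
  refine Or.inr ⟨hhalf, ?_⟩
  rw [smul_smul, show (2 : ℚ)⁻¹ * 2⁻¹ = 4⁻¹ by norm_num]
  exact hR.inv_four_smul_mkQ_notMem_rbar hγ

theorem exists_mem_span_mkQ_eq_foldr_rroot {Bbar : LinearMap.BilinForm ℚ (V ⧸ ker B)}
    (hBbar : ∀ x y : V, Bbar ((ker B).mkQ x) ((ker B).mkQ y) = B x y)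
    {P : Set V} (hPR : P ⊆ R) (l : List (V ⧸ ker B)) {b : V ⧸ ker B}
    (hl : ∀ γ ∈ l, γ ∈ (ker B).mkQ '' P) (hb : b ∈ (ker B).mkQ '' P) :
    ∃ β ∈ R, β ∈ Submodule.span ℚ P ∧ (ker B).mkQ β = l.foldr (rroot Bbar) b := by
  induction l with
  | nil =>
    obtain ⟨p, hp, rfl⟩ := hb
    exact ⟨p, hPR hp, Submodule.subset_span hp, rfl⟩
  | cons c l ih =>
    obtain ⟨β, hβR, hβP, hβ⟩ := ih fun γ hγ => hl γ (List.mem_cons_of_mem _ hγ)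
    obtain ⟨γ, hγ, rfl⟩ := hl c List.mem_cons_self
    refine ⟨rroot B γ β, hR.rroot_mem_s7 (hPR hγ) hβR, ?_, ?_⟩
    · exact sub_mem hβP (Submodule.smul_mem _ _ (Submodule.subset_span hγ))
    · rw [map_rroot_s7 _ hBbar, hβ, List.foldr_cons]

variable {Bbar : LinearMap.BilinForm ℚ (V ⧸ ker B)}
  (hBbar : ∀ x y : V, Bbar ((ker B).mkQ x) ((ker B).mkQ y) = B x y)
  {P : Set V} (hPR : P ⊆ R) (hdisj : Disjoint (Submodule.span ℚ P) (ker B))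
  (hreflbase : ∀ a ∈ RbarRed B R,
    ∃ (l : List (V ⧸ ker B)) (b : V ⧸ ker B),
      (∀ γ ∈ l, γ ∈ (ker B).mkQ '' P) ∧ b ∈ (ker B).mkQ '' P ∧ a = l.foldr (rroot Bbar) b)
include hBbar hPR hdisj hreflbase

theorem mem_of_mem_span_of_mkQ_mem_rbarRed {x : V} (hx : x ∈ Submodule.span ℚ P)
    (hxR : (ker B).mkQ x ∈ RbarRed B R) : x ∈ R := by
  obtain ⟨l, b, hl, hb, hfold⟩ := hreflbase _ hxR
  obtain ⟨β, hβR, hβP, hβ⟩ := hR.exists_mem_span_mkQ_eq_foldr_rroot hBbar hPR l hl hb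
  have hβx : β = x := LinearMap.injOn_of_disjoint_ker le_rfl (by rwa [Submodule.ker_mkQ])
    hβP hx (hβ.trans hfold.symm)
  exact hβx ▸ hβR

theorem deltaSet_subset_closure : DeltaSet B R P ⊆ AddSubgroup.closure R := by
  rintro α ⟨hαP, s, hs, hαs⟩
  have hmk : (ker B).mkQ α ∈ Rbar B R := ⟨α + s, hαs, by
    rw [map_add, Submodule.mkQ_apply _ s, (Submodule.Quotient.mk_eq_zero _).2 hs, add_zero]⟩
  rcases hR.mem_rbarRed_or_inv_two_smul_mem_rbarRed hmk with hred | hred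
  · exact AddSubgroup.subset_closure
      (hR.mem_of_mem_span_of_mkQ_mem_rbarRed hBbar hPR hdisj hreflbase hαP hred)
  · rw [← map_smul] at hred
    have hhalf := AddSubgroup.subset_closure (k := R) <|
      hR.mem_of_mem_span_of_mkQ_mem_rbarRed hBbar hPR hdisj hreflbase
        (Submodule.smul_mem _ _ hαP) hred
    have hα : α = (2 : ℚ)⁻¹ • α + (2 : ℚ)⁻¹ • α := by module
    exact hα ▸ add_mem hhalf hhalf

end IsLEARS

variable {P : Set V}

theorem ggrp_le_closure (hΔ : DeltaSet B R P ⊆ AddSubgroup.closure R) :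
    Ggrp B R P ≤ AddSubgroup.closure R := by
  refine (AddSubgroup.closure_le _).2 ?_
  simp only [Set.iUnion_subset_iff]
  rintro α hα s ⟨-, hαs⟩
  have hs : s = (α + s) - α := by abel
  exact hs ▸ sub_mem (AddSubgroup.subset_closure hαs) (hΔ hα)

theorem ggrp_le_ker : Ggrp B R P ≤ (ker B).toAddSubgroup := by
  refine (AddSubgroup.closure_le _).2 ?_
  simp only [Set.iUnion_subset_iff]
  exact fun _ _ _ hs => hs.1

theorem closure_deltaSet_le_span :
    AddSubgroup.closure (DeltaSet B R P) ≤ (Submodule.span ℚ P).toAddSubgroup :=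
  (AddSubgroup.closure_le _).2 fun _ hα => hα.1

theorem closure_le_closure_deltaSet_sup_ggrp (hsup : Submodule.span ℚ P ⊔ ker B = ⊤) :
    AddSubgroup.closure R ≤ AddSubgroup.closure (DeltaSet B R P) ⊔ Ggrp B R P := by
  refine (AddSubgroup.closure_le _).2 fun γ hγ => ?_
  obtain ⟨α, hα, s, hs, rfl⟩ := Submodule.mem_sup.1 (hsup ▸ Submodule.mem_top (x := γ))
  exact AddSubgroup.mem_sup.2 ⟨α, AddSubgroup.subset_closure ⟨hα, s, hs, hγ⟩,
    s, AddSubgroup.subset_closure (Set.mem_biUnion ⟨hα, s, hs, hγ⟩ ⟨hs, hγ⟩), rfl⟩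

theorem disjoint_closure_deltaSet_ggrp (hdisj : Disjoint (Submodule.span ℚ P) (ker B)) :
    Disjoint (AddSubgroup.closure (DeltaSet B R P)) (Ggrp B R P) :=
  AddSubgroup.disjoint_def.2 fun hd hg =>
    Submodule.disjoint_def.1 hdisj _ (closure_deltaSet_le_span hd) (ggrp_le_ker hg)

end LEARS

theorem closure_eq_internal_direct_sum_general
    {V : Type*} [AddCommGroup V] [Module ℚ V]
    (B : LinearMap.BilinForm ℚ V)
    (R : Set V) (hR : IsLEARS B R)
    (Bbar : LinearMap.BilinForm ℚ (V ⧸ LinearMap.ker B))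
    (hBbar : ∀ x y : V,
      Bbar ((LinearMap.ker B).mkQ x) ((LinearMap.ker B).mkQ y) = B x y)
    (P : Set V) (hPR : P ⊆ R)
    (hinj : Set.InjOn (LinearMap.ker B).mkQ P)
    (hli : LinearIndependent ℚ
      ((↑) : ((LinearMap.ker B).mkQ '' P) → V ⧸ LinearMap.ker B))
    (hspan : Submodule.span ℚ ((LinearMap.ker B).mkQ '' P) = ⊤)
    (hreflbase : ∀ a ∈ RbarRed B R,
      ∃ (l : List (V ⧸ LinearMap.ker B)) (b : V ⧸ LinearMap.ker B),
        (∀ γ ∈ l, γ ∈ (LinearMap.ker B).mkQ '' P) ∧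
        b ∈ (LinearMap.ker B).mkQ '' P ∧
        a = l.foldr (rroot Bbar) b)
    :
    (∀ x ∈ AddSubgroup.closure R,
      ∃ d ∈ AddSubgroup.closure (DeltaSet B R P), ∃ g ∈ Ggrp B R P, x = d + g) ∧
    (∀ d ∈ AddSubgroup.closure (DeltaSet B R P),
      ∀ d' ∈ AddSubgroup.closure (DeltaSet B R P),
      ∀ g ∈ Ggrp B R P, ∀ g' ∈ Ggrp B R P,
        d + g = d' + g' → d = d' ∧ g = g') ∧
    AddSubgroup.closure R ⊓ (LinearMap.ker B).toAddSubgroup = Ggrp B R P := by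
  have hdisj : Disjoint (Submodule.span ℚ P) (LinearMap.ker B) := by
    simpa only [Submodule.ker_mkQ] using
      Submodule.disjoint_span_ker_of_linearIndependent_image hinj hli
  have hsup : Submodule.span ℚ P ⊔ LinearMap.ker B = ⊤ := by
    simpa only [Submodule.ker_mkQ] using Submodule.span_sup_ker_eq_top_of_span_image hspan
  have hdecomp : ∀ x ∈ AddSubgroup.closure R,
      ∃ d ∈ AddSubgroup.closure (DeltaSet B R P), ∃ g ∈ Ggrp B R P, x = d + g := fun x hx => by
    obtain ⟨d, hd, g, hg, rfl⟩ :=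
      AddSubgroup.mem_sup.1 (closure_le_closure_deltaSet_sup_ggrp hsup hx)
    exact ⟨d, hd, g, hg, rfl⟩
  have hGR := ggrp_le_closure (hR.deltaSet_subset_closure hBbar hPR hdisj hreflbase)
  refine ⟨hdecomp, fun d hd d' hd' g hg g' hg' h => ?_, le_antisymm ?_ (le_inf hGR ggrp_le_ker)⟩
  · have := AddSubgroup.add_injective_of_disjoint (disjoint_closure_deltaSet_ggrp hdisj)
      (a₁ := (⟨d, hd⟩, ⟨g, hg⟩)) (a₂ := (⟨d', hd'⟩, ⟨g', hg'⟩)) h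
    simpa only [Prod.ext_iff, Subtype.ext_iff] using this
  · rintro x ⟨hxR, hxker⟩
    obtain ⟨d, hd, g, hg, rfl⟩ := hdecomp x hxR
    have hdker : d ∈ LinearMap.ker B := by
      simpa using (LinearMap.ker B).sub_mem hxker (ggrp_le_ker hg)
    rw [Submodule.disjoint_def.1 hdisj d (closure_deltaSet_le_span hd) hdker, zero_add]
    exact hg

/-- `⟨R⟩` is the internal direct sum of `⟨Δ⟩` and `G`; in particular `⟨R⟩ ∩ V⁰ = G`. -/
theorem closure_eq_internal_direct_sum
    {V : Type*} [AddCommGroup V] [Module ℚ V]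
    (B : LinearMap.BilinForm ℚ V)
    (hsym : ∀ x y : V, B x y = B y x)
    (hpos : ∀ x : V, 0 ≤ B x x)
    (R : Set V) (hR : IsLEARS B R)
    (Bbar : LinearMap.BilinForm ℚ (V ⧸ LinearMap.ker B))
    (hBbar : ∀ x y : V,
      Bbar ((LinearMap.ker B).mkQ x) ((LinearMap.ker B).mkQ y) = B x y)
    (P : Set V) (hPR : P ⊆ R)
    (hinj : Set.InjOn (LinearMap.ker B).mkQ P)
    (hPred : (LinearMap.ker B).mkQ '' P ⊆ RbarRed B R)
    (hli : LinearIndependent ℚ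
      ((↑) : ((LinearMap.ker B).mkQ '' P) → V ⧸ LinearMap.ker B))
    (hspan : Submodule.span ℚ ((LinearMap.ker B).mkQ '' P) = ⊤)
    (hreflbase : ∀ a ∈ RbarRed B R,
      ∃ (l : List (V ⧸ LinearMap.ker B)) (b : V ⧸ LinearMap.ker B),
        (∀ γ ∈ l, γ ∈ (LinearMap.ker B).mkQ '' P) ∧
        b ∈ (LinearMap.ker B).mkQ '' P ∧
        a = l.foldr (rroot Bbar) b)
    :
    (∀ x ∈ AddSubgroup.closure R,
      ∃ d ∈ AddSubgroup.closure (DeltaSet B R P), ∃ g ∈ Ggrp B R P, x = d + g) ∧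
    (∀ d ∈ AddSubgroup.closure (DeltaSet B R P),
      ∀ d' ∈ AddSubgroup.closure (DeltaSet B R P),
      ∀ g ∈ Ggrp B R P, ∀ g' ∈ Ggrp B R P,
        d + g = d' + g' → d = d' ∧ g = g') ∧
    AddSubgroup.closure R ⊓ (LinearMap.ker B).toAddSubgroup = Ggrp B R P :=
  closure_eq_internal_direct_sum_general B R hR Bbar hBbar P hPR hinj hli hspan hreflbase
end

section
/- Suppose (R₁, V) and (R₂, W) are LEARS and φ : V → W is a ℚ-linear isomorphism with φ(R₁) = R₂. Then ⟨φ(α), φ(β)⟩ = ⟨α, β⟩ for all α, β ∈ R₁; the form is preserved up to a nonzero scalar, i.e., there exists c ∈ ℚ, c ≠ 0, with (φ(x), φ(y)) = c·(x, y) for all x, y ∈ V; and φ ∘ σ_α ∘ φ⁻¹ = σ_{φ(α)} for all α ∈ R₁. -/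
open Submodule

/-- Cauchy–Schwarz for a positive semidefinite symmetric bilinear form, in the case
where the second vector is anisotropic. -/
lemma lears_cs {V : Type*} [AddCommGroup V] [Module ℚ V]
    (B : LinearMap.BilinForm ℚ V) (hsym : ∀ x y : V, B x y = B y x)
    (hpos : ∀ x : V, 0 ≤ B x x) (x y : V) (hy : 0 < B y y) :
    (B x y) ^ 2 ≤ B x x * B y y := by
  have h := hpos (x - (B x y / B y y) • y)
  simp only [map_sub, map_smul, LinearMap.sub_apply, LinearMap.smul_apply, smul_eq_mul] at h
  rw [hsym y x] at h
  have hne : B y y ≠ 0 := ne_of_gt hy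
  rw [div_mul_cancel₀ (B x y) hne, sub_self, mul_zero, sub_zero] at h
  have h1 := mul_nonneg h hy.le
  have hd : B x y / B y y * B x y * B y y = B x y ^ 2 := by
    field_simp
  nlinarith [h1, hd]

/-- The key "root string" lemma: the Cartan number `2(α,β)/(β,β)` is determined by the
set of integers `n` with `α + nβ ∈ R`, via its greatest and least elements. -/
lemma lears_string {V : Type*} [AddCommGroup V] [Module ℚ V]
    (B : LinearMap.BilinForm ℚ V) (hsym : ∀ x y : V, B x y = B y x)
    (hpos : ∀ x : V, 0 ≤ B x x) (R : Set V) (h : IsLEARS B R)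
    {α β : V} (hα : α ∈ R) (hβ : β ∈ R) :
    ∃ Mx mx : ℤ, IsGreatest {n : ℤ | α + (n : ℚ) • β ∈ R} Mx ∧
      IsLeast {n : ℤ | α + (n : ℚ) • β ∈ R} mx ∧
      2 * B α β / B β β = -((mx : ℚ) + (Mx : ℚ)) := by
  obtain ⟨hA1, hspan, hA2, hA3, hA4⟩ := h
  have hββ : 0 < B β β := lt_of_le_of_ne (hpos β) (Ne.symm (hA1 β hβ))
  obtain ⟨z, hz⟩ := hA2 α hα β hβ
  set S : Set ℤ := {n : ℤ | α + (n : ℚ) • β ∈ R} with hS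
  -- the bound : for every n ∈ S, |z + 2n| ≤ 4
  have hbound : ∀ n ∈ S, -4 ≤ z + 2 * n ∧ z + 2 * n ≤ 4 := by
    intro n hn
    set γ := α + (n : ℚ) • β with hγdef
    have hγR : γ ∈ R := hn
    have hγγ : 0 < B γ γ := lt_of_le_of_ne (hpos γ) (Ne.symm (hA1 γ hγR))
    have hBγβ : B γ β = B α β + (n : ℚ) * B β β := by
      simp [hγdef, map_add, map_smul]
    obtain ⟨k, hk⟩ := hA2 γ hγR β hβ
    obtain ⟨m, hm⟩ := hA2 β hβ γ hγR
    have hkz : k = z + 2 * n := by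
      have hq : (k : ℚ) = (z : ℚ) + 2 * n := by
        rw [← hk, ← hz, hBγβ]
        field_simp
      exact_mod_cast hq
    have hcs := lears_cs B hsym hpos γ β hββ
    have hprod : (k : ℚ) * (m : ℚ) ≤ 4 := by
      rw [← hk, ← hm, hsym β γ]
      rw [div_mul_div_comm, div_le_iff₀ (by positivity)]
      nlinarith [hcs]
    have hprodZ : k * m ≤ 4 := by exact_mod_cast hprod
    by_cases hk0 : k = 0
    · constructor <;> omega
    · have hγβne : B γ β ≠ 0 := by
        intro h0
        apply hk0
        have : (k : ℚ) = 0 := by rw [← hk, h0]; simp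
        exact_mod_cast this
      have hm0 : m ≠ 0 := by
        intro h0
        rw [h0] at hm
        simp only [Int.cast_zero] at hm
        rw [div_eq_zero_iff] at hm
        rcases hm with hm | hm
        · rw [hsym β γ] at hm
          exact hγβne (by linarith)
        · exact (ne_of_gt hγγ) hm
      have hkmpos : (0 : ℚ) < (k : ℚ) * (m : ℚ) := by
        rw [← hk, ← hm, hsym β γ, div_mul_div_comm]
        have hsq : 0 < B γ β * B γ β := mul_self_pos.mpr hγβne
        exact div_pos (by nlinarith) (by positivity)
      have hkmposZ : 0 < k * m := by exact_mod_cast hkmpos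
      have hm1 : 1 ≤ |m| := Int.one_le_abs hm0
      have habs : |k| ≤ k * m := by
        calc |k| ≤ |k| * |m| := le_mul_of_one_le_right (abs_nonneg k) hm1
          _ = |k * m| := (abs_mul k m).symm
          _ = k * m := abs_of_pos hkmposZ
      have := abs_le.mp (habs.trans hprodZ)
      omega
  have h0S : (0 : ℤ) ∈ S := by
    simp only [hS, Set.mem_setOf_eq, Int.cast_zero, zero_smul, add_zero]
    exact hα
  obtain ⟨Mx, hMxS, hMxub⟩ := Int.exists_greatest_of_bdd
    (⟨2 + z.natAbs, fun n hn => by have := hbound n hn; omega⟩ :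
      ∃ b : ℤ, ∀ n : ℤ, n ∈ S → n ≤ b) ⟨0, h0S⟩
  obtain ⟨mx, hmxS, hmxlb⟩ := Int.exists_least_of_bdd
    (⟨-(2 + z.natAbs), fun n hn => by have := hbound n hn; omega⟩ :
      ∃ b : ℤ, ∀ n : ℤ, n ∈ S → b ≤ n) ⟨0, h0S⟩
  -- the involution n ↦ -z - n preserves S
  have hinv : ∀ n ∈ S, (-z - n) ∈ S := by
    intro n hn
    have h3 := hA3 β hβ _ hn
    have heq : rroot B β (α + (n : ℚ) • β) = α + ((-z - n : ℤ) : ℚ) • β := by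
      unfold rroot
      have hBγβ : B (α + (n : ℚ) • β) β = B α β + (n : ℚ) * B β β := by
        simp [map_add, map_smul]
      have hs : 2 * B (α + (n : ℚ) • β) β / B β β = (z : ℚ) + 2 * n := by
        rw [hBγβ, ← hz]
        field_simp
      rw [hs]
      push_cast
      module
    rw [heq] at h3
    exact h3
  have e1 : mx ≤ -z - Mx := hmxlb _ (hinv Mx hMxS)
  have e2 : -z - mx ≤ Mx := hMxub _ (hinv mx hmxS)
  have hzval : z = -(mx + Mx) := by omega
  refine ⟨Mx, mx, ⟨hMxS, fun n hn => hMxub n hn⟩, ⟨hmxS, fun n hn => hmxlb n hn⟩, ?_⟩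
  rw [hz, hzval]
  push_cast
  ring

/-- An isomorphism of LEARS preserves Cartan integers, preserves the form up to a nonzero
scalar, and intertwines the reflections: `φ ∘ σ_α ∘ φ⁻¹ = σ_{φ(α)}`. -/
theorem isomorphism_of_LEARS_preserves_pairing_form_and_reflections
    {V W : Type*} [AddCommGroup V] [Module ℚ V] [AddCommGroup W] [Module ℚ W]
    (B : LinearMap.BilinForm ℚ V) (C : LinearMap.BilinForm ℚ W)
    (hsymB : ∀ x y : V, B x y = B y x) (hposB : ∀ x : V, 0 ≤ B x x)
    (hsymC : ∀ x y : W, C x y = C y x) (hposC : ∀ x : W, 0 ≤ C x x)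
    (R₁ : Set V) (R₂ : Set W)
    (h₁ : IsLEARS B R₁) (h₂ : IsLEARS C R₂)
    (φ : V ≃ₗ[ℚ] W) (hφ : ⇑φ '' R₁ = R₂) :
    (∀ α ∈ R₁, ∀ β ∈ R₁,
      2 * C (φ α) (φ β) / C (φ β) (φ β) = 2 * B α β / B β β) ∧
    (∃ c : ℚ, c ≠ 0 ∧ ∀ x y : V, C (φ x) (φ y) = c * B x y) ∧
    (∀ α ∈ R₁, ∀ x : V, φ (rroot B α x) = rroot C (φ α) (φ x)) := by
  have hmem : ∀ α ∈ R₁, φ α ∈ R₂ := by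
    intro α hα
    rw [← hφ]
    exact ⟨α, hα, rfl⟩
  -- Part 1st: Cartan integers preserved
  have key : ∀ α ∈ R₁, ∀ β ∈ R₁,
      2 * C (φ α) (φ β) / C (φ β) (φ β) = 2 * B α β / B β β := by
    intro α hα β hβ
    obtain ⟨M1, m1, hG1, hL1, he1⟩ := lears_string B hsymB hposB R₁ h₁ hα hβ
    obtain ⟨M2, m2, hG2, hL2, he2⟩ :=
      lears_string C hsymC hposC R₂ h₂ (hmem α hα) (hmem β hβ)
    have hSeq : {n : ℤ | φ α + (n : ℚ) • φ β ∈ R₂} = {n : ℤ | α + (n : ℚ) • β ∈ R₁} := by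
      ext n
      simp only [Set.mem_setOf_eq]
      rw [← hφ]
      constructor
      · rintro ⟨v, hv, hveq⟩
        have hveq' : v = α + (n : ℚ) • β := by
          apply φ.injective
          rw [hveq, map_add, map_smul]
        rwa [← hveq']
      · intro hv
        exact ⟨_, hv, by rw [map_add, map_smul]⟩
    rw [hSeq] at hG2 hL2
    have hM : M2 = M1 := hG2.unique hG1
    have hm : m2 = m1 := hL2.unique hL1
    rw [he1, he2, hM, hm]
  -- Part 2nd: form preserved up to a nonzero scalar
  have part2 : ∃ c : ℚ, c ≠ 0 ∧ ∀ x y : V, C (φ x) (φ y) = c * B x y := by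
    rcases R₁.eq_empty_or_nonempty with hRe | ⟨α₀, hα₀⟩
    · refine ⟨1, one_ne_zero, ?_⟩
      have hzero : ∀ x : V, x = (0 : V) := by
        intro x
        have hx : x ∈ Submodule.span ℚ R₁ := by rw [h₁.2.1]; trivial
        rw [hRe, Submodule.span_empty, Submodule.mem_bot] at hx
        exact hx
      intro x y
      rw [hzero x, hzero y]
      simp
    · set c := C (φ α₀) (φ α₀) / B α₀ α₀ with hcdef
      have hden : B α₀ α₀ ≠ 0 := h₁.1 _ hα₀
      have hnum : C (φ α₀) (φ α₀) ≠ 0 := h₂.1 _ (hmem α₀ hα₀)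
      have hc : c ≠ 0 := div_ne_zero hnum hden
      -- cross-multiplied version of key
      have key2 : ∀ α ∈ R₁, ∀ β ∈ R₁,
          C (φ α) (φ β) * B β β = B α β * C (φ β) (φ β) := by
        intro α hα β hβ
        have hBββ : B β β ≠ 0 := h₁.1 _ hβ
        have hCββ : C (φ β) (φ β) ≠ 0 := h₂.1 _ (hmem β hβ)
        have hk := key α hα β hβ
        rw [div_eq_div_iff hCββ hBββ] at hk
        linarith
      -- diagonal values preserved
      have hdiag : ∀ α ∈ R₁, C (φ α) (φ α) = c * B α α := by
        intro α hα
        by_contra hne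
        set A := {x ∈ R₁ | C (φ x) (φ x) = c * B x x} with hAdef
        set Bs := {x ∈ R₁ | C (φ x) (φ x) ≠ c * B x x} with hBsdef
        have hcover : R₁ = A ∪ Bs := by
          ext x
          simp only [hAdef, hBsdef, Set.mem_union, Set.mem_setOf_eq]
          tauto
        have horth : ∀ x ∈ A, ∀ y ∈ Bs, B x y = 0 := by
          rintro x ⟨hxR, hxE⟩ y ⟨hyR, hyE⟩
          by_contra hxy
          apply hyE
          have hBxx : B x x ≠ 0 := h₁.1 _ hxR
          -- from key2 y x : C φy φx = c * B y x
          have k1 := key2 y hyR x hxR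
          rw [hxE] at k1
          have f1 : C (φ y) (φ x) = c * B y x := by
            rcases mul_eq_mul_right_iff.mp (by linear_combination k1 : C (φ y) (φ x) * B x x
              = (c * B y x) * B x x) with h | h
            · exact h
            · exact absurd h hBxx
          -- from key2 x y : C φx φy * B y y = B x y * C φy φy
          have k2 := key2 x hxR y hyR
          rw [hsymC (φ x) (φ y), f1, hsymB y x] at k2
          -- c * B x y * B y y = B x y * C φy φy, with B x y ≠ 0
          have : B x y * (c * B y y) = B x y * C (φ y) (φ y) := by linear_combination k2
          have := mul_left_cancel₀ hxy this
          linarith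
        rcases h₁.2.2.2.2 A Bs hcover horth with hAe | hBe
        · have : α₀ ∈ A := ⟨hα₀, by rw [hcdef]; exact (div_mul_cancel₀ _ hden).symm⟩
          rw [hAe] at this
          exact this
        · have : α ∈ Bs := ⟨hα, hne⟩
          rw [hBe] at this
          exact this
      -- off-diagonal values
      have hpair : ∀ α ∈ R₁, ∀ β ∈ R₁, C (φ α) (φ β) = c * B α β := by
        intro α hα β hβ
        have hBββ : B β β ≠ 0 := h₁.1 _ hβ
        have k2 := key2 α hα β hβ
        rw [hdiag β hβ] at k2
        rcases mul_eq_mul_right_iff.mp (by linear_combination k2 : C (φ α) (φ β) * B β β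
          = (c * B α β) * B β β) with h | h
        · exact h
        · exact absurd h hBββ
      -- extend to all of V by linearity
      refine ⟨c, hc, ?_⟩
      have hext : (C.compl₁₂ (φ : V →ₗ[ℚ] W) (φ : V →ₗ[ℚ] W)) = c • B := by
        apply LinearMap.ext_on h₁.2.1
        intro x hx
        apply LinearMap.ext_on h₁.2.1
        intro y hy
        simp only [LinearMap.compl₁₂_apply, LinearMap.smul_apply, smul_eq_mul]
        exact hpair x hx y hy
      intro x y
      have := LinearMap.congr_fun (LinearMap.congr_fun hext x) y
      simpa using this
  refine ⟨key, part2, ?_⟩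
  -- Part 3rd: reflections intertwined
  obtain ⟨c, hc, hform⟩ := part2
  intro α hα x
  unfold rroot
  rw [map_sub, map_smul]
  congr 2
  rw [hform x α, hform α α,
    show 2 * (c * B x α) = c * (2 * B x α) from by ring, mul_div_mul_left _ _ hc]
end

section
/- Let G be an abelian group and E ⊆ G a nonempty full reflection space, i.e., E − 2E ⊆ E and E generates G. Then 2G + E ⊆ E; consequently E is a union of cosets of the subgroup 2G. -/
/-- For a nonempty full reflection space `E` of an abelian group `G` one has `2G + E ⊆ E`;
consequently `E` is a union of cosets of `2G`. -/
theorem twoG_add_subset_of_full_reflection_space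
    {G : Type*} [AddCommGroup G] (E : Set G) (hne : E.Nonempty)
    (hrefl : ∀ e ∈ E, ∀ e' ∈ E, e - 2 • e' ∈ E)
    (hfull : AddSubgroup.closure E = ⊤) :
    (∀ g : G, ∀ e ∈ E, 2 • g + e ∈ E) ∧
    E = ⋃ e ∈ E, {x : G | ∃ g : G, x = 2 • g + e} := by
  have hsym : ∀ e ∈ E, -e ∈ E := by
    intro e he
    have := hrefl e he e he
    have h2 : e - 2 • e = -e := by abel
    rwa [h2] at this
  let S : AddSubgroup G :=
    { carrier := {g | ∀ e ∈ E, 2 • g + e ∈ E}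
      zero_mem' := by intro e he; simpa using he
      add_mem' := by
        intro a b ha hb e he
        have h1 := ha _ (hb e he)
        have h2 : 2 • a + (2 • b + e) = 2 • (a + b) + e := by abel
        rwa [h2] at h1
      neg_mem' := by
        intro a ha e he
        have h1 := ha (-e) (hsym e he)
        have h2 := hsym _ h1
        have h3 : -(2 • a + -e) = 2 • (-a) + e := by abel
        rwa [h3] at h2 }
  have hES : E ⊆ (S : Set G) := by
    intro e' he' e he
    have h1 := hrefl e he (-e') (hsym e' he')
    have h2 : e - 2 • (-e') = 2 • e' + e := by abel
    rwa [h2] at h1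
  have htop : ∀ g : G, g ∈ S := by
    have : AddSubgroup.closure E ≤ S := (AddSubgroup.closure_le S).2 hES
    rw [hfull] at this
    exact fun g => this trivial
  have hmain : ∀ g : G, ∀ e ∈ E, 2 • g + e ∈ E := fun g e he => htop g e he
  refine ⟨hmain, ?_⟩
  ext x
  simp only [Set.mem_iUnion, Set.mem_setOf_eq]
  constructor
  · intro hx
    exact ⟨x, hx, 0, by simp⟩
  · rintro ⟨e, he, g, rfl⟩
    exact hmain g e he
end

section
/- Let G be a cyclic group (written additively) and S ⊆ G a nonempty full reflection space. Then either S = G, or G ≠ 2G and S = 2G + s for every s ∈ G ∖ 2G. In particular, if S is a full pointed reflection space of a cyclic group G, then S = G. -/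
/-!
Reflecting through all of `S` lets one add `2x` to any element of `S` for `x` in the subgroup
generated by `S`; so a full reflection space is a union of cosets of `2G`. In a cyclic group `2G`
has index at most two (parity of the exponent with respect to a generator), so `S` is either `G`
or the single nontrivial coset, and the latter case is exactly `0 ∉ S`.
-/

open AddSubgroup

def IsReflectionSpace {G : Type*} [AddCommGroup G] (S : Set G) : Prop :=
  ∀ e ∈ S, ∀ e' ∈ S, e - 2 • e' ∈ S

namespace IsReflectionSpace

variable {G : Type*} [AddCommGroup G] {S : Set G}

theorem neg_mem (hS : IsReflectionSpace S) {e : G} (he : e ∈ S) : -e ∈ S := by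
  simpa [two_nsmul] using hS e he e he

theorem add_two_nsmul_mem_of_mem_closure (hS : IsReflectionSpace S) {x : G}
    (hx : x ∈ closure S) : ∀ e ∈ S, e + 2 • x ∈ S := by
  induction hx using closure_induction with
  | mem s hs =>
    exact fun e he => by simpa [add_comm] using hS.neg_mem (hS (-e) (hS.neg_mem he) s hs)
  | zero => simp
  | add a b _ _ iha ihb =>
    exact fun e he => by simpa [nsmul_add, add_assoc] using ihb _ (iha e he)
  | neg a _ iha =>
    exact fun e he => by simpa [add_comm] using hS.neg_mem (iha (-e) (hS.neg_mem he))

theorem add_two_nsmul_mem (hS : IsReflectionSpace S) (hfull : closure S = ⊤) :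
    ∀ e ∈ S, ∀ x : G, e + 2 • x ∈ S :=
  fun e he x => hS.add_two_nsmul_mem_of_mem_closure (hfull ▸ mem_top x) e he

end IsReflectionSpace

abbrev doubles (G : Type*) [AddCommGroup G] : AddSubgroup G :=
  (nsmulAddMonoidHom 2 : G →+ G).range

theorem sub_mem_doubles_of_notMem {G : Type*} [AddCommGroup G] [IsAddCyclic G] {x y : G}
    (hx : x ∉ doubles G) (hy : y ∉ doubles G) : x - y ∈ doubles G := by
  obtain ⟨g, hg⟩ := IsAddCyclic.exists_generator (α := G)
  have sub_generator_mem : ∀ z ∉ doubles G, z - g ∈ doubles G := by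
    intro z hz
    obtain ⟨n, rfl⟩ := mem_zmultiples_iff.1 (hg z)
    obtain ⟨k, rfl | rfl⟩ := Int.even_or_odd' n
    · exact absurd ⟨k • g, by simp [mul_zsmul, ← natCast_zsmul]⟩ hz
    · exact ⟨k • g, by simp [add_zsmul, mul_zsmul, ← natCast_zsmul]⟩
  simpa using sub_mem (sub_generator_mem x hx) (sub_generator_mem y hy)

section CosetsOfDoubles

variable {G : Type*} [AddCommGroup G] {S : Set G}

theorem mem_of_sub_mem_doubles (hS : ∀ e ∈ S, ∀ x : G, e + 2 • x ∈ S) {e x : G}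
    (he : e ∈ S) (hx : x - e ∈ doubles G) : x ∈ S := by
  obtain ⟨y, hy⟩ := hx
  rw [nsmulAddMonoidHom_apply] at hy
  simpa [hy] using hS e he y

theorem notMem_doubles_of_zero_notMem (hS : ∀ e ∈ S, ∀ x : G, e + 2 • x ∈ S)
    (h0 : (0 : G) ∉ S) : ∀ x ∈ S, x ∉ doubles G := by
  rintro x hx ⟨y, rfl⟩
  exact h0 (by simpa using hS _ hx (-y))

end CosetsOfDoubles

namespace IsReflectionSpace

variable {G : Type*} [AddCommGroup G] [IsAddCyclic G] {S : Set G}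

theorem eq_univ_of_zero_mem (hS : IsReflectionSpace S) (hfull : closure S = ⊤)
    (h0 : (0 : G) ∈ S) : S = Set.univ := by
  refine Set.eq_univ_of_forall fun x => ?_
  by_cases hx : x ∈ doubles G
  · exact mem_of_sub_mem_doubles (hS.add_two_nsmul_mem hfull) h0 (by simpa using hx)
  · obtain ⟨o, hoS, ho⟩ : ∃ o ∈ S, o ∉ doubles G := by
      by_contra! hSD
      exact hx ((closure_le _).2 hSD (hfull ▸ mem_top x))
    exact mem_of_sub_mem_doubles (hS.add_two_nsmul_mem hfull) hoS
      (sub_mem_doubles_of_notMem hx ho)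

theorem eq_coset_of_zero_notMem (hS : IsReflectionSpace S) (hfull : closure S = ⊤)
    (hne : S.Nonempty) (h0 : (0 : G) ∉ S) {s : G} (hs : s ∉ doubles G) :
    S = {x : G | ∃ g : G, x = 2 • g + s} := by
  have hcoset := hS.add_two_nsmul_mem hfull
  have hodd := notMem_doubles_of_zero_notMem hcoset h0
  ext x
  constructor
  · intro hx
    obtain ⟨y, hy⟩ := sub_mem_doubles_of_notMem (hodd x hx) hs
    exact ⟨y, sub_eq_iff_eq_add.1 hy.symm⟩
  · rintro ⟨y, rfl⟩
    obtain ⟨s₀, hs₀⟩ := hne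
    have hsS : s ∈ S :=
      mem_of_sub_mem_doubles hcoset hs₀ (sub_mem_doubles_of_notMem hs (hodd s₀ hs₀))
    simpa [add_comm] using hcoset s hsS y

end IsReflectionSpace

/-- A nonempty full reflection space `S` of a cyclic group `G` is `G` itself, or `G ≠ 2G` and
`S = 2G + s` for every `s ∈ G ∖ 2G`. In particular a full pointed reflection space equals `G`. -/
theorem full_reflection_space_of_cyclic_group
    {G : Type*} [AddCommGroup G] [IsAddCyclic G]
    (S : Set G) (hne : S.Nonempty)
    (hrefl : ∀ e ∈ S, ∀ e' ∈ S, e - 2 • e' ∈ S)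
    (hfull : AddSubgroup.closure S = ⊤) :
    (S = Set.univ ∨
      (Set.range (fun g : G => 2 • g) ≠ Set.univ ∧
        ∀ s : G, s ∉ Set.range (fun g : G => 2 • g) →
          S = {x : G | ∃ g : G, x = 2 • g + s})) ∧
    (0 ∈ S → S = Set.univ) := by
  have hS : IsReflectionSpace S := hrefl
  by_cases h0 : (0 : G) ∈ S
  · have huniv := hS.eq_univ_of_zero_mem hfull h0
    exact ⟨Or.inl huniv, fun _ => huniv⟩
  · obtain ⟨s₀, hs₀⟩ := hne
    have hs₀odd : s₀ ∉ doubles G :=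
      notMem_doubles_of_zero_notMem (hS.add_two_nsmul_mem hfull) h0 s₀ hs₀
    refine ⟨Or.inr ⟨fun h2G => hs₀odd (Set.eq_univ_iff_forall.1 h2G s₀), fun s hs => ?_⟩,
      fun h => absurd h h0⟩
    exact hS.eq_coset_of_zero_notMem hfull ⟨s₀, hs₀⟩ h0 hs
end

section
/- Let G be a subgroup of ℚ and p a prime such that G is not divisible by p, i.e., G ≠ pG. Then for every n ≥ 1, the quotient group G/pⁿG is cyclic of order pⁿ, i.e., G/pⁿG ≅ ℤ/pⁿℤ. -/
/-!
Pick `g ∈ G \ pG`. For a prime `p`, `m • g ∈ pG` forces `p ∣ m` (otherwise Bézout writes `g`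
itself as a multiple of `p`), and torsion-freeness upgrades this to `m • g ∈ pⁿG → pⁿ ∣ m`.
Since `G ≤ ℚ`, every `x ∈ G` satisfies `b • x = a • g` with `a, b` coprime, so `p ∤ b` and
Bézout again gives `x ≡ k • g` modulo `pⁿG`. Hence `k ↦ k • g` maps `ℤ` onto `G/pⁿG` with
kernel `pⁿℤ`.
-/

/-- The additive group endomorphism `x ↦ n • x`; its range is the subgroup `nG`. -/
def zsmulHom (A : Type*) [AddCommGroup A] (n : ℤ) : A →+ A :=
  AddMonoidHom.mk' (fun x => n • x) (fun x y => smul_add n x y)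

open QuotientAddGroup

section zsmulHom

variable {A : Type*} [AddCommGroup A]

lemma mem_range_zsmulHom {m : ℤ} {x : A} : x ∈ (zsmulHom A m).range ↔ ∃ y, m • y = x :=
  AddMonoidHom.mem_range

variable {p : ℤ} {g : A}

lemma Prime.dvd_of_zsmul_mem_range_zsmulHom (hp : Prime p) (hg : g ∉ (zsmulHom A p).range)
    {m : ℤ} (hm : m • g ∈ (zsmulHom A p).range) : p ∣ m := by
  by_contra hpm
  obtain ⟨u, v, huv⟩ := (hp.coprime_iff_not_dvd).mpr hpm
  obtain ⟨y, hy⟩ := mem_range_zsmulHom.mp hm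
  refine hg (mem_range_zsmulHom.mpr ⟨u • g + v • y, ?_⟩)
  calc p • (u • g + v • y) = u • p • g + v • p • y := by module
    _ = (u * p + v * m) • g := by rw [hy]; module
    _ = g := by rw [huv, one_smul]

lemma Prime.pow_dvd_of_zsmul_mem_range_zsmulHom_pow [IsAddTorsionFree A] (hp : Prime p)
    (hg : g ∉ (zsmulHom A p).range) {n : ℕ} {m : ℤ}
    (hm : m • g ∈ (zsmulHom A (p ^ n)).range) : p ^ n ∣ m := by
  induction n generalizing m with
  | zero => simp
  | succ n ih =>
    obtain ⟨y, hy⟩ := mem_range_zsmulHom.mp hm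
    obtain ⟨k, rfl⟩ : p ^ n ∣ m :=
      ih (mem_range_zsmulHom.mpr ⟨p • y, by rw [← hy, pow_succ, mul_smul]⟩)
    have hky : k • g = p • y := by
      apply zsmul_right_injective (pow_ne_zero n hp.ne_zero)
      simp only [← mul_smul, ← pow_succ, hy]
    obtain ⟨l, rfl⟩ := hp.dvd_of_zsmul_mem_range_zsmulHom hg (mem_range_zsmulHom.mpr ⟨y, hky.symm⟩)
    exact ⟨l, by ring⟩

lemma Prime.exists_sub_zsmul_mem_range_zsmulHom_pow (hp : Prime p)
    (hg : g ∉ (zsmulHom A p).range) {x : A} {a b : ℤ} (hab : IsCoprime a b)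
    (hx : b • x = a • g) (n : ℕ) : ∃ k : ℤ, x - k • g ∈ (zsmulHom A (p ^ n)).range := by
  have hpb : ¬ p ∣ b := by
    rintro ⟨c, rfl⟩
    have hpa : p ∣ a := hp.dvd_of_zsmul_mem_range_zsmulHom hg
      (mem_range_zsmulHom.mpr ⟨c • x, by rw [← hx, mul_smul]⟩)
    exact hp.not_isUnit (hab.isUnit_of_dvd' hpa (dvd_mul_right p c))
  obtain ⟨u, v, huv⟩ := ((hp.coprime_iff_not_dvd).mpr hpb).pow_left (m := n)
  refine ⟨v * a, mem_range_zsmulHom.mpr ⟨u • x, ?_⟩⟩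
  calc p ^ n • u • x = (u * p ^ n + v * b) • x - (v * a) • g := by rw [mul_smul v a, ← hx]; module
    _ = x - (v * a) • g := by rw [huv, one_smul]

variable (A) in
def zsmulModRange (g : A) (m : ℤ) : ℤ →+ A ⧸ (zsmulHom A m).range :=
  (mk' _).comp (zmultiplesHom A g)

lemma zsmulModRange_apply (g : A) (m k : ℤ) : zsmulModRange A g m k = ↑(k • g) := rfl

lemma Prime.ker_zsmulModRange_pow [IsAddTorsionFree A] (hp : Prime p)
    (hg : g ∉ (zsmulHom A p).range) (n : ℕ) :
    (zsmulModRange A g (p ^ n)).ker = AddSubgroup.zmultiples (p ^ n) := by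
  ext m
  rw [AddMonoidHom.mem_ker, zsmulModRange_apply, Int.mem_zmultiples_iff]
  refine ⟨fun h => hp.pow_dvd_of_zsmul_mem_range_zsmulHom_pow hg ((eq_zero_iff _).mp h), ?_⟩
  rintro ⟨c, rfl⟩
  exact (eq_zero_iff _).mpr (mem_range_zsmulHom.mpr ⟨c • g, by rw [← mul_smul]⟩)

theorem Nat.Prime.nonempty_quotient_range_zsmulHom_pow_addEquiv_zmod [IsAddTorsionFree A]
    {p : ℕ} (hp : p.Prime) {g : A} (hg : g ∉ (zsmulHom A p).range)
    (hdep : ∀ x : A, ∃ a b : ℤ, IsCoprime a b ∧ b • x = a • g) (n : ℕ) :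
    Nonempty (A ⧸ (zsmulHom A ((p : ℤ) ^ n)).range ≃+ ZMod (p ^ n)) := by
  have hpZ : _root_.Prime (p : ℤ) := Nat.prime_iff_prime_int.mp hp
  have hsurj : Function.Surjective (zsmulModRange A g ((p : ℤ) ^ n)) := by
    intro c
    obtain ⟨x, rfl⟩ := mk_surjective c
    obtain ⟨a, b, hab, hx⟩ := hdep x
    obtain ⟨k, hk⟩ := hpZ.exists_sub_zsmul_mem_range_zsmulHom_pow hg hab hx n
    exact ⟨k, (eq_iff_sub_mem.mpr hk).symm⟩
  have hker : (zsmulModRange A g ((p : ℤ) ^ n)).ker = AddSubgroup.zmultiples ((p ^ n : ℕ) : ℤ) := by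
    rw [hpZ.ker_zsmulModRange_pow hg, Nat.cast_pow]
  exact ⟨(quotientKerEquivOfSurjective _ hsurj).symm.trans
    ((quotientAddEquivOfEq hker).trans (Int.quotientZMultiplesNatEquivZMod (p ^ n)))⟩

end zsmulHom

lemma AddSubgroup.exists_isCoprime_zsmul_eq_zsmul (G : AddSubgroup ℚ) {g : G} (hg : (g : ℚ) ≠ 0)
    (x : G) : ∃ a b : ℤ, IsCoprime a b ∧ b • x = a • g := by
  set q := (x : ℚ) / g with hq
  refine ⟨q.num, q.den, Int.isCoprime_iff_gcd_eq_one.mpr q.reduced, Subtype.ext ?_⟩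
  rw [AddSubgroup.coe_zsmul, AddSubgroup.coe_zsmul, zsmul_eq_mul, zsmul_eq_mul]
  push_cast
  rw [← Rat.mul_den_eq_num, hq]
  field_simp

theorem quotient_by_pow_smul_of_not_divisible_general
    (G : AddSubgroup ℚ) (p : ℕ) (hp : p.Prime)
    (hdiv : (zsmulHom ↥G (p : ℤ)).range ≠ ⊤)
    (n : ℕ) :
    Nonempty ((↥G ⧸ (zsmulHom ↥G ((p : ℤ) ^ n)).range) ≃+ ZMod (p ^ n)) := by
  obtain ⟨g, -, hg⟩ := SetLike.exists_of_lt hdiv.lt_top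
  have hg0 : (g : ℚ) ≠ 0 := fun h => hg ((Subtype.ext h : g = 0) ▸ zero_mem _)
  exact hp.nonempty_quotient_range_zsmulHom_pow_addEquiv_zmod hg
    (G.exists_isCoprime_zsmul_eq_zsmul hg0) n

/-- If a subgroup `G` of `ℚ` is not divisible by a prime `p`, then `G/pⁿG ≅ ℤ/pⁿℤ`. -/
theorem quotient_by_pow_smul_of_not_divisible
    (G : AddSubgroup ℚ) (p : ℕ) (hp : p.Prime)
    (hdiv : (zsmulHom ↥G (p : ℤ)).range ≠ ⊤)
    (n : ℕ) (hn : 1 ≤ n) :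
    Nonempty ((↥G ⧸ (zsmulHom ↥G ((p : ℤ) ^ n)).range) ≃+ ZMod (p ^ n)) :=
  quotient_by_pow_smul_of_not_divisible_general G p hp hdiv n
end

section
/- Let G be a subgroup of ℚ, p a prime, n ≥ 1, and H a subgroup of G such that G/H ≅ ℤ/pⁿℤ. Then G is not divisible by p (G ≠ pG) and H = pⁿG. -/
theorem Rat.mem_zmultiples_inv_den_mul_den (a b : ℚ) :
    a ∈ AddSubgroup.zmultiples (((a.den * b.den : ℕ) : ℚ)⁻¹) := by
  refine ⟨a.num * b.den, ?_⟩
  have ha : (a.den : ℚ) ≠ 0 := by positivity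
  have hb : (b.den : ℚ) ≠ 0 := by positivity
  change (a.num * b.den : ℤ) • _ = a
  rw [zsmul_eq_mul]
  push_cast
  field_simp
  rw [mul_comm, Rat.mul_den_eq_num]

theorem Rat.exists_mem_closure_pair_zsmul_eq (a b : ℚ) :
    ∃ z ∈ AddSubgroup.closure {a, b}, ∃ s t : ℤ, s • z = a ∧ t • z = b := by
  set N : ℕ := a.den * b.den
  have hle : AddSubgroup.closure {a, b} ≤ AddSubgroup.zmultiples ((N : ℚ)⁻¹) := by
    rw [AddSubgroup.closure_le, Set.insert_subset_iff, Set.singleton_subset_iff, SetLike.mem_coe,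
      SetLike.mem_coe]
    refine ⟨Rat.mem_zmultiples_inv_den_mul_den a b, ?_⟩
    simpa only [N, mul_comm a.den] using Rat.mem_zmultiples_inv_den_mul_den b a
  have := AddSubgroup.isAddCyclic_of_le hle
  obtain ⟨z, hz⟩ := IsAddCyclic.exists_generator (α := AddSubgroup.closure {a, b})
  obtain ⟨s, hs⟩ := hz ⟨a, AddSubgroup.subset_closure (by simp)⟩
  obtain ⟨t, ht⟩ := hz ⟨b, AddSubgroup.subset_closure (by simp)⟩
  exact ⟨z, z.2, s, t, congrArg Subtype.val hs, congrArg Subtype.val ht⟩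

theorem AddSubgroup.exists_zsmul_eq_of_rat (G : AddSubgroup ℚ) (a b : G) :
    ∃ z : G, ∃ s t : ℤ, s • z = a ∧ t • z = b := by
  obtain ⟨z, hz, s, t, hs, ht⟩ := Rat.exists_mem_closure_pair_zsmul_eq a b
  have hzG : z ∈ G := (AddSubgroup.closure_le G).2
    (Set.insert_subset_iff.2 ⟨a.2, Set.singleton_subset_iff.2 b.2⟩) hz
  exact ⟨⟨z, hzG⟩, s, t, Subtype.ext hs, Subtype.ext ht⟩

section

variable {A : Type*} [AddCommGroup A]

theorem zsmulHom_range_le_ker {m : ℕ} (f : A →+ ZMod m) : (zsmulHom A m).range ≤ f.ker := by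
  rintro _ ⟨g, rfl⟩
  change f ((m : ℤ) • g) = 0
  rw [map_zsmul, zsmul_eq_mul, Int.cast_natCast, ZMod.natCast_self, zero_mul]

theorem ker_le_zsmulHom_range (hA : ∀ a b : A, ∃ z : A, ∃ s t : ℤ, s • z = a ∧ t • z = b)
    {m : ℕ} (f : A →+ ZMod m) (hf : Function.Surjective f) : f.ker ≤ (zsmulHom A m).range := by
  intro h hh
  obtain ⟨x, hx⟩ := hf 1
  obtain ⟨z, s, t, rfl, rfl⟩ := hA h x
  have hs : (s : ZMod m) = 0 := by
    calc (s : ZMod m) = s • t • f z := by rw [← map_zsmul, hx, zsmul_eq_mul, mul_one]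
      _ = t • f (s • z) := by rw [smul_comm, map_zsmul]
      _ = 0 := by rw [f.mem_ker.1 hh, smul_zero]
  obtain ⟨k, rfl⟩ := (ZMod.intCast_zmod_eq_zero_iff_dvd s m).1 hs
  exact ⟨k • z, (mul_smul _ _ _).symm⟩

theorem ker_eq_zsmulHom_range (hA : ∀ a b : A, ∃ z : A, ∃ s t : ℤ, s • z = a ∧ t • z = b)
    {m : ℕ} (f : A →+ ZMod m) (hf : Function.Surjective f) : f.ker = (zsmulHom A m).range :=
  le_antisymm (ker_le_zsmulHom_range hA f hf) (zsmulHom_range_le_ker f)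

theorem zsmulHom_pow_range_eq_top {k : ℤ} (hk : (zsmulHom A k).range = ⊤) (n : ℕ) :
    (zsmulHom A (k ^ n)).range = ⊤ := by
  rw [AddMonoidHom.range_eq_top] at hk ⊢
  induction n with
  | zero => exact fun a => ⟨a, by simp [zsmulHom]⟩
  | succ n ih =>
    intro a
    obtain ⟨b, rfl⟩ := ih a
    obtain ⟨c, rfl⟩ := hk b
    exact ⟨c, by simp only [zsmulHom, AddMonoidHom.mk'_apply, pow_succ, mul_smul]⟩

end

/-- If `G ≤ ℚ` and `G/H ≅ ℤ/pⁿℤ`, then `G` is not divisible by `p` and `H = pⁿG`. -/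
theorem eq_pow_smul_of_quotient_iso
    (G : AddSubgroup ℚ) (p n : ℕ) (hp : p.Prime) (hn : 1 ≤ n)
    (H : AddSubgroup ↥G)
    (hiso : Nonempty ((↥G ⧸ H) ≃+ ZMod (p ^ n))) :
    (zsmulHom ↥G (p : ℤ)).range ≠ ⊤ ∧ H = (zsmulHom ↥G ((p : ℤ) ^ n)).range := by
  obtain ⟨e⟩ := hiso
  let f : G →+ ZMod (p ^ n) := e.toAddMonoidHom.comp (QuotientAddGroup.mk' H)
  have hker : f.ker = H := by
    ext a
    simp [f]
  have hsurj : Function.Surjective f := e.surjective.comp (QuotientAddGroup.mk'_surjective H)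
  have hH : H = (zsmulHom G ((p : ℤ) ^ n)).range := by
    rw [← hker, ker_eq_zsmulHom_range G.exists_zsmul_eq_of_rat f hsurj, Nat.cast_pow]
  refine ⟨fun hdiv => ?_, hH⟩
  have : Fact (1 < p ^ n) := ⟨Nat.one_lt_pow (by omega) hp.one_lt⟩
  obtain ⟨x, hx⟩ := hsurj 1
  have hxH : x ∈ H := hH ▸ (zsmulHom_pow_range_eq_top hdiv n).symm ▸ AddSubgroup.mem_top x
  rw [← hker, AddMonoidHom.mem_ker, hx] at hxH
  exact one_ne_zero hxH
end

section
/- Let G be a subgroup of ℚ that is divisible by 2 (i.e., G = 2G), and let S ⊆ G be a nonempty full reflection space of G. Then S = G. -/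
/-- A nonempty full reflection space of a subgroup of `ℚ` divisible by `2` is the whole group. -/
theorem full_reflection_space_of_two_divisible_subgroup_of_rat
    (G : AddSubgroup ℚ)
    (hdiv : Set.range (fun g : ↥G => 2 • g) = Set.univ)
    (S : Set ↥G) (hne : S.Nonempty)
    (hrefl : ∀ e ∈ S, ∀ e' ∈ S, e - 2 • e' ∈ S)
    (hfull : AddSubgroup.closure S = ⊤) :
    S = Set.univ := by
  obtain ⟨a, ha⟩ := hne
  have hneg : ∀ s ∈ S, -s ∈ S := by
    intro s hs
    have := hrefl s hs s hs
    simpa [two_smul] using this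
  set H : AddSubgroup ↥G :=
    { carrier := {h | ∀ e ∈ S, e + 2 • h ∈ S}
      zero_mem' := by intro e he; simpa using he
      add_mem' := by
        intro x y hx hy e he
        have := hy _ (hx e he)
        simpa [smul_add, add_assoc] using this
      neg_mem' := by
        intro x hx e he
        have h1 := hx (-e) (hneg e he)
        have h2 := hneg _ h1
        simpa [neg_add, add_comm] using h2 } with hH
  have hSH : S ⊆ ↑H := by
    intro s hs e he
    have h1 := hrefl (-e) (hneg e he) s hs
    have h2 := hneg _ h1
    simpa [neg_sub, sub_eq_add_neg, add_comm] using h2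
  have hle : AddSubgroup.closure S ≤ H := AddSubgroup.closure_le H |>.mpr hSH
  have hall : ∀ h : ↥G, ∀ e ∈ S, e + 2 • h ∈ S := by
    intro h
    exact hle (by rw [hfull]; trivial)
  apply Set.eq_univ_of_forall
  intro x
  have hx : x - a ∈ Set.range (fun g : ↥G => 2 • g) := by
    rw [hdiv]; trivial
  obtain ⟨g, hg⟩ := hx
  have := hall g a ha
  rw [show a + 2 • g = x by simp only at hg; rw [hg]; abel] at this
  exact this
end

section
/- Let G be a nonzero subgroup of ℚ that is not divisible by 2 (G ≠ 2G). Then for every s ∈ G ∖ 2G, G is the disjoint union of 2G and 2G + s; moreover every nonempty full reflection space S of G satisfies S = G or S = 2G + s for every s ∈ G ∖ 2G, and every full pointed reflection space of G equals G. -/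
private lemma even_smul_even' {M : Type*} [AddCommGroup M] {n : ℤ} (hn : Even n) (x : M) :
    Even (n • x) := by
  obtain ⟨k, rfl⟩ := hn
  exact ⟨k • x, by rw [add_smul]⟩

private lemma even_of_odd_smul' {M : Type*} [AddCommGroup M] {n : ℤ} {x : M}
    (hn : Odd n) (h : Even (n • x)) : Even x := by
  obtain ⟨k, rfl⟩ := hn
  obtain ⟨m, hm⟩ := h
  have h1 : (2 * k + 1) • x = k • x + k • x + x := by
    rw [add_smul, one_smul, two_mul, add_smul]
  rw [h1] at hm
  refine ⟨m - k • x, ?_⟩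
  have hx : x = m + m - (k • x + k • x) := by rw [← hm]; abel
  conv_lhs => rw [hx]
  abel

private lemma key_lemma' (G : AddSubgroup ℚ) {a b : ↥G} (ha : ¬ Even a) (hb : ¬ Even b) :
    Even (a - b) := by
  have hb0 : (b : ℚ) ≠ 0 := by
    intro h
    exact hb ⟨0, Subtype.ext (by simp [h])⟩
  set q : ℚ := (a : ℚ) / (b : ℚ) with hq
  have hd0 : (q.den : ℚ) ≠ 0 := Nat.cast_ne_zero.mpr q.den_nz
  have h1 : (q.num : ℚ) = q * q.den := (div_eq_iff hd0).mp (Rat.num_div_den q)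
  have heq : (q.den : ℤ) • a = (q.num : ℤ) • b := by
    apply Subtype.ext
    push_cast [zsmul_eq_mul]
    rw [h1, hq]
    field_simp
  have hpar : ¬ (Even q.num ∧ Even (q.den : ℤ)) := by
    rintro ⟨h2n, h2d⟩
    have hcop := q.reduced
    have d1 : (2:ℕ) ∣ q.num.natAbs := Int.natAbs_dvd_natAbs.mpr h2n.two_dvd
    have d2 : (2:ℕ) ∣ q.den := by
      have h2d' : Even q.den := by exact_mod_cast h2d
      exact h2d'.two_dvd
    have hg := Nat.dvd_gcd d1 d2
    rw [Nat.Coprime] at hcop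
    rw [hcop] at hg
    norm_num at hg
  rcases Int.even_or_odd ((q.den : ℤ)) with hde | hdo
  · have hno : Odd q.num :=
      (Int.even_or_odd q.num).resolve_left (fun h => hpar ⟨h, hde⟩)
    have he : Even ((q.num : ℤ) • b) := heq ▸ even_smul_even' hde a
    exact absurd (even_of_odd_smul' hno he) hb
  · rcases Int.even_or_odd q.num with hne | hno
    · have he : Even ((q.den : ℤ) • a) := heq ▸ even_smul_even' hne b
      exact absurd (even_of_odd_smul' hdo he) ha
    · have h2 : (q.den : ℤ) • (a - b) = ((q.num : ℤ) - q.den) • b := by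
        rw [smul_sub, heq, sub_smul]
      have he : Even ((q.den : ℤ) • (a - b)) := by
        rw [h2]; exact even_smul_even' (hno.sub_odd hdo) b
      exact even_of_odd_smul' hdo he

/-- For a nonzero subgroup `G` of `ℚ` not divisible by `2`: `G = 2G ⊔ (2G + s)` disjointly for
any `s ∈ G ∖ 2G`; every nonempty full reflection space `S` of `G` is `G` or `2G + s` for every
`s ∈ G ∖ 2G`; and every full pointed reflection space of `G` equals `G`. -/
theorem full_reflection_spaces_of_not_two_divisible_subgroup_of_rat
    (G : AddSubgroup ℚ) (hG : G ≠ ⊥)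
    (hdiv : Set.range (fun g : ↥G => 2 • g) ≠ Set.univ) :
    (∀ s : ↥G, s ∉ Set.range (fun g : ↥G => 2 • g) →
      (Set.range (fun g : ↥G => 2 • g) ∪ {x : ↥G | ∃ g : ↥G, x = 2 • g + s}
          = Set.univ ∧
        Disjoint (Set.range (fun g : ↥G => 2 • g))
          {x : ↥G | ∃ g : ↥G, x = 2 • g + s})) ∧
    (∀ S : Set ↥G, S.Nonempty → (∀ e ∈ S, ∀ e' ∈ S, e - 2 • e' ∈ S) →
      AddSubgroup.closure S = ⊤ →
      (S = Set.univ ∨ ∀ s : ↥G, s ∉ Set.range (fun g : ↥G => 2 • g) →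
        S = {x : ↥G | ∃ g : ↥G, x = 2 • g + s})) ∧
    (∀ S : Set ↥G, 0 ∈ S → (∀ e ∈ S, ∀ e' ∈ S, e - 2 • e' ∈ S) →
      AddSubgroup.closure S = ⊤ → S = Set.univ) := by
  have hRmem : ∀ x : ↥G, x ∈ Set.range (fun g : ↥G => 2 • g) ↔ Even x := by
    intro x
    rw [even_iff_exists_two_nsmul]
    constructor
    · rintro ⟨g, rfl⟩; exact ⟨g, rfl⟩
    · rintro ⟨g, rfl⟩; exact ⟨g, rfl⟩
  have hex : ∃ x : ↥G, ¬ Even x := by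
    by_contra h
    push_neg at h
    apply hdiv
    ext x
    simp only [Set.mem_univ, iff_true]
    exact (hRmem x).mpr (h x)
  -- Part 1
  have part1 : ∀ s : ↥G, s ∉ Set.range (fun g : ↥G => 2 • g) →
      (Set.range (fun g : ↥G => 2 • g) ∪ {x : ↥G | ∃ g : ↥G, x = 2 • g + s}
          = Set.univ ∧
        Disjoint (Set.range (fun g : ↥G => 2 • g))
          {x : ↥G | ∃ g : ↥G, x = 2 • g + s}) := by
    intro s hs
    have hso : ¬ Even s := fun h => hs ((hRmem s).mpr h)
    constructor
    · ext x
      simp only [Set.mem_univ, iff_true, Set.mem_union, Set.mem_setOf_eq]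
      by_cases hx : Even x
      · exact Or.inl ((hRmem x).mpr hx)
      · obtain ⟨r, hr⟩ := key_lemma' G hx hso
        exact Or.inr ⟨r, by rw [two_nsmul, ← hr]; abel⟩
    · rw [Set.disjoint_left]
      rintro x hx ⟨g, rfl⟩
      apply hso
      obtain ⟨r, hr⟩ := (hRmem _).mp hx
      refine ⟨r - g, ?_⟩
      have h4 : s = (r + r) - 2 • g := by rw [← hr]; abel
      rw [h4, two_nsmul]
      abel
  -- Part 2
  have part2 : ∀ S : Set ↥G, S.Nonempty → (∀ e ∈ S, ∀ e' ∈ S, e - 2 • e' ∈ S) →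
      AddSubgroup.closure S = ⊤ →
      (S = Set.univ ∨ ∀ s : ↥G, s ∉ Set.range (fun g : ↥G => 2 • g) →
        S = {x : ↥G | ∃ g : ↥G, x = 2 • g + s}) := by
    intro S hSne hrefl hclo
    have hneg : ∀ e ∈ S, -e ∈ S := by
      intro e he
      have := hrefl e he e he
      rwa [two_nsmul, sub_add_eq_sub_sub, sub_self, zero_sub] at this
    -- the subgroup of bilateral translations preserving S
    set H : AddSubgroup ↥G :=
      { carrier := {h | ∀ x ∈ S, x + h ∈ S ∧ x - h ∈ S}
        zero_mem' := by intro x hx; exact ⟨by simpa using hx, by simpa using hx⟩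
        add_mem' := by
          intro a b ha hb x hx
          constructor
          · have := (hb (x + a) (ha x hx).1).1
            rwa [add_assoc] at this
          · have := (hb (x - a) (ha x hx).2).2
            rwa [sub_sub] at this
        neg_mem' := by
          intro a ha x hx
          constructor
          · have := (ha x hx).2
            rwa [sub_eq_add_neg] at this
          · have := (ha x hx).1
            rwa [sub_neg_eq_add] } with hH
    have hH2 : ∀ e ∈ S, (2 : ℕ) • e ∈ H := by
      intro e he x hx
      constructor
      · have := hrefl x hx (-e) (hneg e he)
        rwa [smul_neg, sub_neg_eq_add] at this
      · exact hrefl x hx e he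
    have hall : ∀ g : ↥G, (2 : ℕ) • g ∈ H := by
      have hle : AddSubgroup.closure S ≤
          H.comap (AddMonoidHom.mk' (fun g : ↥G => (2 : ℕ) • g) (fun a b => smul_add 2 a b)) := by
        rw [AddSubgroup.closure_le]
        intro e he
        exact hH2 e he
      rw [hclo] at hle
      intro g
      exact hle (AddSubgroup.mem_top g)
    have htrans : ∀ x ∈ S, ∀ y : ↥G, Even (y - x) → y ∈ S := by
      intro x hx y hy
      obtain ⟨r, hr⟩ := hy
      have hmem : x + 2 • r ∈ S := ((hall r) x hx).1
      have hy' : y = x + 2 • r := by rw [two_nsmul, ← hr]; abel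
      rwa [← hy'] at hmem
    have hodd : ∃ s₀ ∈ S, ¬ Even s₀ := by
      by_contra h
      push_neg at h
      set E : AddSubgroup ↥G :=
        { carrier := {x | Even x}
          zero_mem' := Even.zero
          add_mem' := fun h1 h2 => h1.add h2
          neg_mem' := fun h1 => h1.neg } with hE
      have hle : AddSubgroup.closure S ≤ E := by
        rw [AddSubgroup.closure_le]
        intro e he
        exact h e he
      rw [hclo] at hle
      obtain ⟨x, hx⟩ := hex
      exact hx (hle (AddSubgroup.mem_top x))
    obtain ⟨s₀, hs₀S, hs₀⟩ := hodd
    by_cases hmix : ∃ t ∈ S, Even t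
    · left
      obtain ⟨t, htS, hte⟩ := hmix
      ext y
      simp only [Set.mem_univ, iff_true]
      by_cases hy : Even y
      · exact htrans t htS y (hy.sub hte)
      · exact htrans s₀ hs₀S y (key_lemma' G hy hs₀)
    · right
      push_neg at hmix
      intro s hs
      have hsodd : ¬ Even s := fun h => hs ((hRmem s).mpr h)
      ext x
      simp only [Set.mem_setOf_eq]
      constructor
      · intro hxS
        obtain ⟨r, hr⟩ := key_lemma' G (hmix x hxS) hsodd
        exact ⟨r, by rw [two_nsmul, ← hr]; abel⟩
      · rintro ⟨g, rfl⟩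
        apply htrans s₀ hs₀S
        have h1 : Even (s - s₀) := key_lemma' G hsodd hs₀
        have h2 : Even ((2 : ℕ) • g : ↥G) := ⟨g, two_nsmul g⟩
        have h3 : 2 • g + s - s₀ = 2 • g + (s - s₀) := by abel
        rw [h3]
        exact h2.add h1
  refine ⟨part1, part2, ?_⟩
  intro S h0 hrefl hclo
  rcases part2 S ⟨0, h0⟩ hrefl hclo with h | h
  · exact h
  · obtain ⟨x, hx⟩ := hex
    have hxR : x ∉ Set.range (fun g : ↥G => 2 • g) := fun hc => hx ((hRmem x).mp hc)
    rw [h x hxR] at h0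
    obtain ⟨g, hg⟩ := h0
    exfalso
    apply hx
    refine ⟨-g, ?_⟩
    have : x = -(2 • g) := by rw [eq_neg_iff_add_eq_zero, add_comm, ← hg]
    rw [this, two_nsmul]
    abel
end
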